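/- arXiv:2009.06792 — 5 statements merged into one kernel-verified Lean document; each statement's English description precedes it below -/
import Mathlib

section
/- Let k, t1, t2, …, tv be integers with k ≥ t1 > t2 > … > tv ≥ 1, and let S = {π1, …, πn} be a (k; k−t1, k−t2, …, k−tv)-SPID in a finite-dimensional vector space V over a field, with n ≥ 3. Then there exists a permutation σ of {1, …, n} such that, setting δ_j(S_σ) = dim⟨π_{σ(1)}, …, π_{σ(j)}⟩ − dim⟨π_{σ(1)}, …, π_{σ(j−1)}⟩ for 2 ≤ j ≤ n, one has t1 = δ_2(S_σ) ≥ δ_3(S_σ) ≥ … ≥ δ_n(S_σ). -/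
open Module

variable {F : Type*} [Field F] {V : Type*} [AddCommGroup V] [Module F V]
  [FiniteDimensional F V]

/-- The subspace `⟨π_1, …, π_j⟩` (1-based), i.e. the span of the `π i` with `(i : ℕ) < j`. -/
def pspan {n : ℕ} (π : Fin n → Submodule F V) (j : ℕ) : Submodule F V :=
  ⨆ i : Fin n, ⨆ _ : (i : ℕ) < j, π i

/-- The 1-based difference sequence `δ_j = dim⟨π_1,…,π_j⟩ - dim⟨π_1,…,π_{j-1}⟩`. -/
noncomputable def delta {n : ℕ} (π : Fin n → Submodule F V) (j : ℕ) : ℕ :=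
  finrank F ↥(pspan π j) - finrank F ↥(pspan π (j - 1))

/-- A `(k; ℓ_1, …, ℓ_v)`-SPID, where `L` is the set of prescribed intersection dimensions:
a family of pairwise distinct `k`-dimensional subspaces, any two distinct members meeting
in a dimension belonging to `L`, and every value of `L` being attained. -/
def IsSPID {n : ℕ} (k : ℕ) (L : Set ℕ) (π : Fin n → Submodule F V) : Prop :=
  Function.Injective π ∧
  (∀ i, finrank F ↥(π i) = k) ∧
  (∀ i j, i ≠ j → finrank F ↥(π i ⊓ π j) ∈ L) ∧
  ∀ ℓ ∈ L, ∃ i j, i ≠ j ∧ finrank F ↥(π i ⊓ π j) = ℓ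

/-- An `ℓ`-junta: all members pass through a common `ℓ`-dimensional subspace. -/
def IsJunta {n : ℕ} (ℓ : ℕ) (π : Fin n → Submodule F V) : Prop :=
  ∃ C : Submodule F V, finrank F ↥C = ℓ ∧ ∀ i, C ≤ π i

/-- `S` contains an `ℓ`-sunflower of maximal dimension with `p` petals (all petals being
`k`-dimensional): `p` members of `S` pairwise meeting exactly in a common `ℓ`-dimensional
center and spanning a subspace of dimension `ℓ + p(k - ℓ)`. -/
def HasMaxSunflower (k ℓ p : ℕ) (S : Set (Submodule F V)) : Prop :=
  ∃ A : Finset (Submodule F V), ↑A ⊆ S ∧ A.card = p ∧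
    ∃ C : Submodule F V, finrank F ↥C = ℓ ∧
      (∀ W ∈ A, ∀ W' ∈ A, W ≠ W' → W ⊓ W' = C) ∧
      finrank F ↥(A.sup id) = ℓ + p * (k - ℓ)

/-! Order the members greedily: start with a member `π a` having a partner at the smallest
intersection dimension `k - t₁`, and at each later step append a member that enlarges the
current span as much as possible. The second step then gains exactly `t₁`, and by
submodularity of `finrank`, `dim (W' ⊔ X) - dim W' ≤ dim (W ⊔ X) - dim W` for `W ≤ W'`, the
gain at each step is at most the gain of the previous (greedy) step. -/

set_option linter.unusedSectionVars false

theorem finrank_sup_add_le_of_le {U W : Submodule F V} (X : Submodule F V) (hUW : U ≤ W) :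
    finrank F ↥(W ⊔ X) + finrank F ↥U ≤ finrank F ↥(U ⊔ X) + finrank F ↥W := by
  have hsup : W ⊔ (U ⊔ X) = W ⊔ X := by rw [← sup_assoc, sup_eq_left.mpr hUW]
  have hinf : finrank F ↥U ≤ finrank F ↥(W ⊓ (U ⊔ X)) :=
    Submodule.finrank_mono (le_inf hUW le_sup_left)
  have := Submodule.finrank_sup_add_finrank_inf_eq W (U ⊔ X)
  rw [hsup] at this
  omega

section Pspan

variable {n : ℕ}

theorem pspan_zero (ρ : Fin n → Submodule F V) : pspan ρ 0 = ⊥ := by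
  simp [pspan]

theorem pspan_mono (ρ : Fin n → Submodule F V) {j j' : ℕ} (h : j ≤ j') :
    pspan ρ j ≤ pspan ρ j' :=
  biSup_mono fun _ hi => lt_of_lt_of_le hi h

theorem pspan_succ (ρ : Fin n → Submodule F V) {j : ℕ} (hj : j < n) :
    pspan ρ (j + 1) = pspan ρ j ⊔ ρ ⟨j, hj⟩ := by
  apply le_antisymm
  · refine iSup₂_le fun i hi => ?_
    rcases Nat.lt_succ_iff_lt_or_eq.mp hi with hi | hi
    · exact le_sup_of_le_left
        (le_iSup₂_of_le (f := fun (i : Fin n) (_ : (i : ℕ) < j) => ρ i) i hi le_rfl)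
    · exact le_sup_of_le_right (le_of_eq (congrArg ρ (Fin.ext hi)))
  · exact sup_le (pspan_mono ρ j.le_succ)
      (le_iSup₂_of_le (f := fun (i : Fin n) (_ : (i : ℕ) < j + 1) => ρ i) ⟨j, hj⟩
        j.lt_succ_self le_rfl)

theorem pspan_congr {ρ ρ' : Fin n → Submodule F V} {j : ℕ}
    (h : ∀ i : Fin n, (i : ℕ) < j → ρ i = ρ' i) : pspan ρ j = pspan ρ' j :=
  iSup_congr fun i => iSup_congr fun hi => h i hi

theorem pspan_one (ρ : Fin n → Submodule F V) (hn : 0 < n) : pspan ρ 1 = ρ ⟨0, hn⟩ := by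
  rw [pspan_succ ρ hn, pspan_zero, bot_sup_eq]

end Pspan

section Greedy

variable {n : ℕ}

/-- Positions are 0-based here, while `delta` is 1-based: greedy choice at `j` governs
`delta (π ∘ σ) (j + 1)`. -/
def IsGreedyAt (π : Fin n → Submodule F V) (σ : Equiv.Perm (Fin n)) (j : ℕ) : Prop :=
  ∀ c, (∀ i : Fin n, (i : ℕ) < j → σ i ≠ c) →
    finrank F ↥(pspan (π ∘ σ) j ⊔ π c) ≤ finrank F ↥(pspan (π ∘ σ) (j + 1))

theorem IsGreedyAt.congr {π : Fin n → Submodule F V} {σ σ' : Equiv.Perm (Fin n)} {j : ℕ}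
    (hσ : IsGreedyAt π σ j) (h : ∀ i : Fin n, (i : ℕ) ≤ j → σ' i = σ i) :
    IsGreedyAt π σ' j := by
  have hspan : ∀ m ≤ j + 1, pspan (π ∘ σ') m = pspan (π ∘ σ) m := fun m hm =>
    pspan_congr fun i hi => congrArg π (h i (by omega))
  intro c hc
  rw [hspan j j.le_succ, hspan (j + 1) le_rfl]
  exact hσ c fun i hi => h i hi.le ▸ hc i hi

theorem exists_swap_isGreedyAt (π : Fin n → Submodule F V) (σ : Equiv.Perm (Fin n)) {m : ℕ}
    (hm : m < n) :
    ∃ σ' : Equiv.Perm (Fin n), (∀ i : Fin n, (i : ℕ) < m → σ' i = σ i) ∧ IsGreedyAt π σ' m := by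
  obtain ⟨i₀, hi₀, hmax⟩ := Finset.exists_max_image (Finset.univ.filter fun i : Fin n => m ≤ i)
    (fun i => finrank F ↥(pspan (π ∘ σ) m ⊔ π (σ i))) ⟨⟨m, hm⟩, by simp⟩
  simp only [Finset.mem_filter, Finset.mem_univ, true_and] at hi₀ hmax
  set σ' := σ * Equiv.swap ⟨m, hm⟩ i₀
  have hagree : ∀ i : Fin n, (i : ℕ) < m → σ' i = σ i := fun i hi => by
    simp only [σ', Equiv.Perm.mul_apply]
    rw [Equiv.swap_apply_of_ne_of_ne (Fin.ne_of_lt hi) (by intro h; subst h; omega)]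
  refine ⟨σ', hagree, fun c hc => ?_⟩
  have hspan : pspan (π ∘ σ') m = pspan (π ∘ σ) m :=
    pspan_congr fun i hi => congrArg π (hagree i hi)
  have hc_late : m ≤ (σ.symm c : ℕ) := by
    by_contra! h
    exact hc _ h (by rw [hagree _ h, Equiv.apply_symm_apply])
  have hσ'm : σ' ⟨m, hm⟩ = σ i₀ := by simp [σ']
  have hgain := hmax _ hc_late
  rw [Equiv.apply_symm_apply] at hgain
  rwa [pspan_succ _ hm, hspan, Function.comp_apply, hσ'm]

theorem exists_perm_isGreedyAt (π : Fin n → Submodule F V) (τ : Equiv.Perm (Fin n)) {p : ℕ}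
    (hp : p ≤ n) :
    ∃ σ : Equiv.Perm (Fin n), (∀ i : Fin n, (i : ℕ) < p → σ i = τ i) ∧
      ∀ j, p ≤ j → j < n → IsGreedyAt π σ j := by
  suffices ∀ m, p ≤ m → m ≤ n → ∃ σ : Equiv.Perm (Fin n),
      (∀ i : Fin n, (i : ℕ) < p → σ i = τ i) ∧ ∀ j, p ≤ j → j < m → IsGreedyAt π σ j from
    this n hp le_rfl
  intro m hpm
  induction m, hpm using Nat.le_induction with
  | base => exact fun _ => ⟨τ, fun _ _ => rfl, fun j hj hj' => absurd hj' (by omega)⟩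
  | succ m hpm ih =>
    intro hm
    obtain ⟨σ, hτ, hgreedy⟩ := ih (by omega)
    obtain ⟨σ', hagree, hσ'⟩ := exists_swap_isGreedyAt π σ (m := m) (by omega)
    refine ⟨σ', fun i hi => (hagree i (by omega)).trans (hτ i hi), fun j hpj hj => ?_⟩
    rcases Nat.lt_succ_iff_lt_or_eq.mp hj with hj | rfl
    · exact (hgreedy j hpj hj).congr fun i hi => hagree i (by omega)
    · exact hσ'

theorem delta_add_two_le_of_isGreedyAt {π : Fin n → Submodule F V} {σ : Equiv.Perm (Fin n)}
    {j : ℕ} (hσ : IsGreedyAt π σ j) (hj : j + 1 < n) :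
    delta (π ∘ σ) (j + 2) ≤ delta (π ∘ σ) (j + 1) := by
  have hgain := hσ (σ ⟨j + 1, hj⟩) fun i hi h => by
    have : (i : ℕ) = j + 1 := congrArg Fin.val (σ.injective h)
    omega
  have hsub := finrank_sup_add_le_of_le (π (σ ⟨j + 1, hj⟩))
    (pspan_mono (π ∘ σ) (Nat.le_add_right j 1))
  have hmono := Submodule.finrank_mono (pspan_mono (π ∘ σ) (Nat.le_add_right j 1))
  have hstep : pspan (π ∘ σ) (j + 2) = pspan (π ∘ σ) (j + 1) ⊔ π (σ ⟨j + 1, hj⟩) :=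
    pspan_succ _ hj
  rw [← hstep] at hsub
  rw [delta, delta, show j + 2 - 1 = j + 1 by omega, Nat.add_sub_cancel]
  omega

end Greedy

theorem IsSPID.finrank_sup_add_le {n k m : ℕ} {L : Set ℕ} {π : Fin n → Submodule F V}
    (hS : IsSPID k L π) (hL : ∀ ℓ ∈ L, m ≤ ℓ) {i j : Fin n} (hij : i ≠ j) :
    finrank F ↥(π i ⊔ π j) + m ≤ 2 * k := by
  obtain ⟨-, hdim, hint, -⟩ := hS
  have hsup := Submodule.finrank_sup_add_finrank_inf_eq (π i) (π j)
  rw [hdim i, hdim j] at hsup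
  have := hL _ (hint i j hij)
  omega

theorem statement0_general {n v k : ℕ} (hv : 0 < v)
    (t : Fin v → ℕ) (ht1 : t ⟨0, hv⟩ ≤ k) (hanti : StrictAnti t)
    (π : Fin n → Submodule F V)
    (hS : IsSPID k {ℓ | ∃ i, ℓ = k - t i} π) :
    ∃ σ : Equiv.Perm (Fin n),
      delta (π ∘ σ) 2 = t ⟨0, hv⟩ ∧
      ∀ j, 2 ≤ j → j < n → delta (π ∘ σ) (j + 1) ≤ delta (π ∘ σ) j := by
  obtain ⟨a, b, hab, hab_dim⟩ := hS.2.2.2 _ ⟨⟨0, hv⟩, rfl⟩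
  have hmin : ∀ ℓ ∈ {ℓ | ∃ i, ℓ = k - t i}, k - t ⟨0, hv⟩ ≤ ℓ := by
    rintro _ ⟨i, rfl⟩
    exact Nat.sub_le_sub_left (hanti.antitone (Fin.le_iff_val_le_val.mpr (Nat.zero_le _))) k
  have hn : 1 < n := by
    by_contra! h
    exact hab (Fin.ext (by omega))
  obtain ⟨σ, hσ₀, hgreedy⟩ := exists_perm_isGreedyAt π (Equiv.swap ⟨0, by omega⟩ a)
    (p := 1) hn.le
  have hσa : σ ⟨0, by omega⟩ = a := by simpa using hσ₀ ⟨0, by omega⟩ one_pos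
  have hspan₁ : pspan (π ∘ σ) 1 = π a := by
    rw [pspan_one _ (by omega), Function.comp_apply, hσa]
  have hspan₂ : pspan (π ∘ σ) 2 = π a ⊔ π (σ ⟨1, hn⟩) := by
    rw [pspan_succ _ hn, hspan₁, Function.comp_apply]
  have hupper := hS.finrank_sup_add_le hmin (i := a) (j := σ ⟨1, hn⟩)
    (hσa ▸ σ.injective.ne (by simp))
  have hlower := hgreedy 1 le_rfl hn b fun i hi => by
    rw [show i = ⟨0, by omega⟩ from Fin.ext (Nat.lt_one_iff.mp hi), hσa]
    exact hab
  rw [hspan₁, hspan₂] at hlower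
  have hab_sup := Submodule.finrank_sup_add_finrank_inf_eq (π a) (π b)
  rw [hS.2.1 a, hS.2.1 b, hab_dim] at hab_sup
  refine ⟨σ, ?_, fun j hj hjn => ?_⟩
  · rw [delta, hspan₂, show 2 - 1 = 1 from rfl, hspan₁, hS.2.1 a]
    omega
  · obtain ⟨m, rfl⟩ : ∃ m, j = m + 1 := ⟨j - 1, by omega⟩
    exact delta_add_two_le_of_isGreedyAt (hgreedy m (by omega) (by omega)) hjn

/-- Proposition 1.2 (sorting): a SPID can always be reordered so that the associated
array `(δ_2, …, δ_n)` is non-increasing, starting with `δ_2 = t_1`. -/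
theorem statement0 {n v k : ℕ} (hn : 3 ≤ n) (hv : 0 < v)
    (t : Fin v → ℕ) (ht1 : t ⟨0, hv⟩ ≤ k) (hanti : StrictAnti t) (htv : ∀ i, 1 ≤ t i)
    (π : Fin n → Submodule F V)
    (hS : IsSPID k {ℓ | ∃ i, ℓ = k - t i} π) :
    ∃ σ : Equiv.Perm (Fin n),
      delta (π ∘ σ) 2 = t ⟨0, hv⟩ ∧
      ∀ j, 2 ≤ j → j < n → delta (π ∘ σ) (j + 1) ≤ delta (π ∘ σ) j :=
  statement0_general hv t ht1 hanti π hS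
end

section
/- Let k, t1, t2 be integers with k > t1 > t2 ≥ 2, and let S be a (k; k−t1, k−t2)-SPID in a finite-dimensional vector space V over a field, with n = |S| ≥ 3 and dim V ≥ n·t1 + (k−t1). If dim⟨S⟩ ≥ k + (t1−1)(n−1) + 2, then S is a (k−t1)-junta, i.e. all elements of S contain a common (k−t1)-dimensional subspace. -/
open Module

variable {F : Type*} [Field F] {V : Type*} [AddCommGroup V] [Module F V]
  [FiniteDimensional F V]

lemma supD_aux {n : ℕ} (π : Fin n → Submodule F V) (T : Finset (Fin n)) {m : Fin n}
    (hm : m ∈ T) :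
    finrank F ↥(T.sup π) + finrank F ↥(π m ⊓ (T.erase m).sup π)
      = finrank F ↥(π m) + finrank F ↥((T.erase m).sup π) := by
  have h : T.sup π = π m ⊔ (T.erase m).sup π := by
    nth_rewrite 1 [← Finset.insert_erase hm]
    rw [Finset.sup_insert]
  rw [h]
  exact Submodule.finrank_sup_add_finrank_inf_eq _ _

lemma good_aux {n : ℕ} (π : Fin n → Submodule F V) (T : Finset (Fin n)) {a : ℕ} {m : Fin n}
    (hm : m ∈ T) (hT2 : (T.erase m).Nonempty)
    (hint : ∀ i ∈ T, ∀ j ∈ T, i ≠ j → a ≤ finrank F ↥(π i ⊓ π j))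
    (hg : finrank F ↥(π m ⊓ (T.erase m).sup π) ≤ a) :
    ∃ C : Submodule F V, finrank F ↥C = a ∧ ∀ i ∈ T, C ≤ π i := by
  have heq : ∀ i ∈ T.erase m, π m ⊓ π i = π m ⊓ (T.erase m).sup π := by
    intro i hi
    refine Submodule.eq_of_le_of_finrank_le (inf_le_inf_left _ (Finset.le_sup hi)) ?_
    exact le_trans hg
      (hint m hm i (Finset.mem_of_mem_erase hi) (Ne.symm (Finset.ne_of_mem_erase hi)))
  obtain ⟨i0, hi0⟩ := hT2
  refine ⟨π m ⊓ (T.erase m).sup π, ?_, ?_⟩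
  · have h1 : a ≤ finrank F ↥(π m ⊓ π i0) :=
      hint m hm i0 (Finset.mem_of_mem_erase hi0) (Ne.symm (Finset.ne_of_mem_erase hi0))
    rw [heq i0 hi0] at h1
    omega
  · intro i hi
    rcases eq_or_ne i m with rfl | hne
    · exact inf_le_left
    · rw [← heq i (Finset.mem_erase.mpr ⟨hne, hi⟩)]
      exact inf_le_right

lemma claim_aux {n : ℕ} (π : Fin n → Submodule F V) (m : Fin n) (C : Submodule F V)
    {a t1 : ℕ} (hCm : ¬ C ≤ π m) :
    ∀ R : Finset (Fin n), m ∉ R →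
      (∀ i ∈ R, finrank F ↥(π i) = a + t1) →
      (∀ i ∈ R, a ≤ finrank F ↥(π m ⊓ π i)) →
      (∀ i ∈ R, C ≤ π i) →
      R.Nonempty →
      finrank F ↥(R.sup π) + R.card ≤ finrank F ↥(π m ⊓ R.sup π) + t1 * R.card + 1 := by
  intro R
  induction R using Finset.cons_induction with
  | empty => intro _ _ _ _ h; exact absurd h (by simp)
  | cons x S hx IH =>
    intro hmR hdim hint hC _
    have hxc : x ∈ Finset.cons x S hx := Finset.mem_cons_self x S
    have hmem : ∀ i ∈ S, i ∈ Finset.cons x S hx := fun i hi => Finset.mem_cons.mpr (Or.inr hi)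
    rw [Finset.sup_cons, Finset.card_cons]
    rcases S.eq_empty_or_nonempty with rfl | hS
    · rw [Finset.sup_empty, Finset.card_empty]
      have hb : π x ⊔ (⊥ : Submodule F V) = π x := sup_bot_eq _
      rw [hb]
      have h2 : finrank F ↥(π x) = a + t1 := hdim x hxc
      have h7 : a ≤ finrank F ↥(π m ⊓ π x) := hint x hxc
      omega
    · have IH' := IH (fun h => hmR (hmem m h)) (fun i hi => hdim i (hmem i hi))
        (fun i hi => hint i (hmem i hi)) (fun i hi => hC i (hmem i hi)) hS
      obtain ⟨r0, hr0⟩ := hS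
      set W := S.sup π with hW
      have h1 : finrank F ↥(π x ⊔ W) + finrank F ↥(π x ⊓ W)
          = finrank F ↥(π x) + finrank F ↥W := Submodule.finrank_sup_add_finrank_inf_eq _ _
      have h2 : finrank F ↥(π x) = a + t1 := hdim x hxc
      have h3 : ((π m ⊓ π x) ⊔ (π m ⊓ W)) ≤ π m ⊓ (π x ⊔ W) :=
        sup_le (inf_le_inf_left _ le_sup_left) (inf_le_inf_left _ le_sup_right)
      have h3' : finrank F ↥((π m ⊓ π x) ⊔ (π m ⊓ W)) ≤ finrank F ↥(π m ⊓ (π x ⊔ W)) :=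
        Submodule.finrank_mono h3
      have h4 : finrank F ↥((π m ⊓ π x) ⊔ (π m ⊓ W)) + finrank F ↥((π m ⊓ π x) ⊓ (π m ⊓ W))
          = finrank F ↥(π m ⊓ π x) + finrank F ↥(π m ⊓ W) :=
        Submodule.finrank_sup_add_finrank_inf_eq _ _
      have h5 : (π m ⊓ π x) ⊓ (π m ⊓ W) ≤ π m ⊓ (π x ⊓ W) :=
        le_inf (le_trans inf_le_left inf_le_left) (inf_le_inf inf_le_right inf_le_right)
      have h5' : finrank F ↥((π m ⊓ π x) ⊓ (π m ⊓ W)) ≤ finrank F ↥(π m ⊓ (π x ⊓ W)) :=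
        Submodule.finrank_mono h5
      have h6 : π m ⊓ (π x ⊓ W) < π x ⊓ W := by
        refine lt_of_le_of_ne inf_le_right ?_
        intro he
        apply hCm
        have hCxW : C ≤ π x ⊓ W :=
          le_inf (hC x hxc) (le_trans (hC r0 (hmem r0 hr0)) (Finset.le_sup hr0))
        rw [← he] at hCxW
        exact le_trans hCxW inf_le_left
      have h6' : finrank F ↥(π m ⊓ (π x ⊓ W)) < finrank F ↥(π x ⊓ W) :=
        Submodule.finrank_lt_finrank_of_lt h6
      have h7 : a ≤ finrank F ↥(π m ⊓ π x) := hint x hxc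
      have h9 : t1 * (S.card + 1) = t1 * S.card + t1 := by ring
      linarith only [IH', h1, h2, h3', h4, h5', h6', h7, h9]

lemma junta_aux : ∀ p : ℕ, 3 ≤ p → ∀ {n : ℕ} (π : Fin n → Submodule F V)
    (T : Finset (Fin n)) {a s : ℕ}, T.card = p →
    (∀ i ∈ T, finrank F ↥(π i) = a + (s + 1)) →
    (∀ i ∈ T, ∀ j ∈ T, i ≠ j → a ≤ finrank F ↥(π i ⊓ π j)) →
    (a + (s + 1) + s * (p - 1) + 2 ≤ finrank F ↥(T.sup π)) →
    ∃ C : Submodule F V, finrank F ↥C = a ∧ ∀ i ∈ T, C ≤ π i := by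
  intro p hp
  induction p, hp using Nat.le_induction with
  | base =>
    intro n π T a s hcard hdim hint hspan
    by_cases hgood : ∃ m ∈ T, finrank F ↥(π m ⊓ (T.erase m).sup π) ≤ a
    · obtain ⟨m, hm, hg⟩ := hgood
      have hT2 : (T.erase m).Nonempty := by
        rw [← Finset.card_pos, Finset.card_erase_of_mem hm, hcard]; omega
      exact good_aux π T hm hT2 hint hg
    · push_neg at hgood
      exfalso
      have hTne : T.Nonempty := by rw [← Finset.card_pos, hcard]; omega
      obtain ⟨m, hm⟩ := hTne
      have hg : a < finrank F ↥(π m ⊓ (T.erase m).sup π) := hgood m hm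
      have hD := supD_aux π T hm
      have hcard2 : (T.erase m).card = 2 := by
        rw [Finset.card_erase_of_mem hm, hcard]
      obtain ⟨i, j, hij, h2⟩ := Finset.card_eq_two.mp hcard2
      have hiT : i ∈ T := Finset.mem_of_mem_erase (h2 ▸ Finset.mem_insert_self i {j})
      have hjT : j ∈ T := Finset.mem_of_mem_erase
        (h2 ▸ Finset.mem_insert_of_mem (Finset.mem_singleton_self j))
      have hWsup : (T.erase m).sup π = π i ⊔ π j := by
        rw [h2, Finset.sup_insert, Finset.sup_singleton]
      have hu : finrank F ↥(π i ⊔ π j) + finrank F ↥(π i ⊓ π j)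
          = finrank F ↥(π i) + finrank F ↥(π j) := Submodule.finrank_sup_add_finrank_inf_eq _ _
      have hdi : finrank F ↥(π i) = a + (s + 1) := hdim i hiT
      have hdj : finrank F ↥(π j) = a + (s + 1) := hdim j hjT
      have hdm : finrank F ↥(π m) = a + (s + 1) := hdim m hm
      have hintij : a ≤ finrank F ↥(π i ⊓ π j) := hint i hiT j hjT hij
      rw [hWsup] at hD hg
      simp only [show (3:ℕ) - 1 = 2 from rfl] at hspan
      omega
  | succ p hp3 IH =>
    intro n π T a s hcard hdim hint hspan
    by_cases hgood : ∃ m ∈ T, finrank F ↥(π m ⊓ (T.erase m).sup π) ≤ a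
    · obtain ⟨m, hm, hg⟩ := hgood
      have hT2 : (T.erase m).Nonempty := by
        rw [← Finset.card_pos, Finset.card_erase_of_mem hm, hcard]; omega
      exact good_aux π T hm hT2 hint hg
    · push_neg at hgood
      have hTne : T.Nonempty := by rw [← Finset.card_pos, hcard]; omega
      obtain ⟨m, hm⟩ := hTne
      have hg : a < finrank F ↥(π m ⊓ (T.erase m).sup π) := hgood m hm
      have hD := supD_aux π T hm
      have hdm : finrank F ↥(π m) = a + (s + 1) := hdim m hm
      have hcard' : (T.erase m).card = p := by
        rw [Finset.card_erase_of_mem hm, hcard]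
        omega
      obtain ⟨r, rfl⟩ : ∃ r, p = r + 3 := ⟨p - 3, by omega⟩
      have hmul1 : s * (r + 3) = s * (r + 2) + s := by ring
      have hspan' : a + (s + 1) + s * (r + 3) + 2 ≤ finrank F ↥(T.sup π) := by
        have : (r + 3 + 1 - 1) = r + 3 := by omega
        rwa [this] at hspan
      have hW : a + (s + 1) + s * (r + 3 - 1) + 2 ≤ finrank F ↥((T.erase m).sup π) := by
        have h1 : (r + 3 - 1) = r + 2 := by omega
        rw [h1]
        omega
      obtain ⟨C, hCdim, hC⟩ := IH π (T.erase m) hcard'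
        (fun i hi => hdim i (Finset.mem_of_mem_erase hi))
        (fun i hi j hj hij => hint i (Finset.mem_of_mem_erase hi) j (Finset.mem_of_mem_erase hj) hij)
        hW
      have hCm : C ≤ π m := by
        by_contra hCm
        have hcl := claim_aux π m C hCm (T.erase m) (Finset.notMem_erase m T)
          (fun i hi => hdim i (Finset.mem_of_mem_erase hi))
          (fun i hi => hint m hm i (Finset.mem_of_mem_erase hi)
            (Ne.symm (Finset.ne_of_mem_erase hi)))
          hC
          (by rw [← Finset.card_pos, hcard']; omega)
        rw [hcard'] at hcl
        have hmul2 : (s + 1) * (r + 3) = s * (r + 3) + (r + 3) := by ring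
        omega
      refine ⟨C, hCdim, ?_⟩
      intro i hi
      rcases eq_or_ne i m with rfl | hne
      · exact hCm
      · exact hC i (Finset.mem_erase.mpr ⟨hne, hi⟩)

/-- Theorem 2.1: a `(k; k-t₁, k-t₂)`-SPID spanning a subspace of dimension at least
`k + (t₁-1)(n-1) + 2` is a `(k-t₁)`-junta. -/
theorem statement3 {n k t1 t2 : ℕ} (h1 : 2 ≤ t2) (h2 : t2 < t1) (h3 : t1 < k)
    (hn : 3 ≤ n) (π : Fin n → Submodule F V)
    (hS : IsSPID k {k - t1, k - t2} π)
    (hdimV : n * t1 + (k - t1) ≤ finrank F V)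
    (hspan : k + (t1 - 1) * (n - 1) + 2 ≤ finrank F ↥(⨆ i, π i)) :
    IsJunta (k - t1) π := by
  obtain ⟨hinj, hk, hint, hatt⟩ := hS
  have huniv : (Finset.univ : Finset (Fin n)).sup π = ⨆ i, π i := by
    apply le_antisymm
    · exact Finset.sup_le fun i _ => le_iSup π i
    · exact iSup_le fun i => Finset.le_sup (Finset.mem_univ i)
  obtain ⟨s, rfl⟩ : ∃ s, t1 = s + 1 := ⟨t1 - 1, by omega⟩
  obtain ⟨a, rfl⟩ : ∃ a, k = a + (s + 1) := ⟨k - (s + 1), by omega⟩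
  have hkt : a + (s + 1) - (s + 1) = a := by omega
  obtain ⟨C, hC1, hC2⟩ := junta_aux n hn π Finset.univ (by simp)
    (fun i _ => hk i)
    (fun i _ j _ hij => by
      have h := hint i j hij
      rcases h with h | h
      · omega
      · simp only [Set.mem_singleton_iff] at h
        omega)
    (by
      rw [huniv]
      simpa using hspan)
  unfold IsJunta
  exact ⟨C, by omega, fun i => hC2 i (Finset.mem_univ i)⟩
end

section
/- Let k, t1, t2 be integers with k > t1 > t2 ≥ 2, and let S = {π1, …, πn} be a (k; k−t1, k−t2)-SPID in a finite-dimensional vector space V over a field, with n ≥ 3, ordered so that the sequence (δ_2, …, δ_n) is non-increasing. Suppose π1, …, πm (m ≥ 2) form a (k−t1)-sunflower of maximal dimension with center V', that for some index r > m the subspace π_r does not contain V', and that there exists an index s with m < s < r and δ_s ≤ t2. Then dim⟨S⟩ ≤ k + (n−1)(t1−1) − (t1−t2) + 2. -/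
/-! Every member meets `π_1` in dimension at least `k - t₁`, so `δ_j ≤ t₁` for `j ≥ 2`; the
maximal sunflower forces `δ_j = t₁` for `j ≤ m`, and we let `M ≥ m` be the last index up to which
this holds (`M < s` because `δ_s ≤ t₂ < t₁`). A member with `δ = t₁` meets the span of its
predecessors in a `(k - t₁)`-space, which must then be its intersection with both `π_1` and `π_2`,
i.e. `V'`. Since `π_r ⊓ V' < V'`, the spaces `π_r ⊓ π_i` (`i ≤ M`), each of dimension at least
`k - t₁`, gain at least one dimension per member, so `δ_r ≤ t₁ + 1 - M`. Adding up `δ ≤ t₁` up to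
`M`, `δ ≤ t₁ - 1` up to `s - 1`, `δ ≤ t₂` up to `r - 1` and `δ ≤ δ_r` afterwards (the sequence is
non-increasing) gives the bound. -/

open Module

variable {F : Type*} [Field F] {V : Type*} [AddCommGroup V] [Module F V]
  [FiniteDimensional F V]

omit [FiniteDimensional F V] in
theorem IsSPID.le_finrank_inf {n k ℓ : ℕ} {L : Set ℕ} {π : Fin n → Submodule F V}
    (hS : IsSPID k L π) (hL : ∀ x ∈ L, ℓ ≤ x) {i j : Fin n} (hij : i ≠ j) :
    ℓ ≤ finrank F ↥(π i ⊓ π j) :=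
  hL _ (hS.2.2.1 i j hij)

section PspanLattice

omit [FiniteDimensional F V]

variable {n : ℕ} (π : Fin n → Submodule F V)

theorem le_pspan {i : Fin n} {j : ℕ} (h : (i : ℕ) < j) : π i ≤ pspan π j :=
  le_iSup_of_le i (le_iSup_of_le h le_rfl)

theorem pspan_le {j : ℕ} {W : Submodule F V} (h : ∀ i : Fin n, (i : ℕ) < j → π i ≤ W) :
    pspan π j ≤ W :=
  iSup_le fun i => iSup_le (h i)

theorem pspan_mono_s5 {a b : ℕ} (h : a ≤ b) : pspan π a ≤ pspan π b :=
  pspan_le π fun _ hi => le_pspan π (hi.trans_le h)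

theorem pspan_zero_s5 : pspan π 0 = ⊥ := by
  simp [pspan]

theorem pspan_succ_s5 {j : ℕ} (h : j < n) : pspan π (j + 1) = pspan π j ⊔ π ⟨j, h⟩ := by
  refine le_antisymm (pspan_le π fun i hi => ?_)
    (sup_le (pspan_mono_s5 π j.le_succ) (le_pspan π j.lt_succ_self))
  rcases (Nat.lt_succ_iff_lt_or_eq.mp hi) with hij | hij
  · exact le_sup_of_le_left (le_pspan π hij)
  · exact le_sup_of_le_right (le_of_eq (congrArg π (Fin.ext hij)))

theorem pspan_one_s5 (h : 0 < n) : pspan π 1 = π ⟨0, h⟩ := by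
  rw [pspan_succ_s5 π h, pspan_zero_s5, bot_sup_eq]

theorem iSup_eq_pspan : ⨆ i, π i = pspan π n :=
  le_antisymm (iSup_le fun i => le_pspan π i.isLt) (pspan_le π fun i _ => le_iSup π i)

end PspanLattice

section PspanFinrank

variable {n : ℕ} (π : Fin n → Submodule F V)

theorem finrank_pspan_succ (j : ℕ) :
    finrank F (pspan π (j + 1)) = finrank F (pspan π j) + delta π (j + 1) := by
  have := Submodule.finrank_mono (pspan_mono_s5 π (Nat.le_add_right j 1))
  rw [delta, Nat.add_sub_cancel]
  omega

theorem delta_succ_add_finrank_inf (j : Fin n) :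
    delta π (j + 1) + finrank F ↥(π j ⊓ pspan π j) = finrank F (π j) := by
  have := Submodule.finrank_sup_add_finrank_inf_eq (π j) (pspan π j)
  rw [sup_comm, ← pspan_succ_s5 π j.isLt, finrank_pspan_succ] at this
  omega

theorem finrank_pspan_le_add_mul {i j : ℕ} {c : ℤ} (hij : i ≤ j)
    (h : ∀ l, i < l → l ≤ j → (delta π l : ℤ) ≤ c) :
    (finrank F (pspan π j) : ℤ) ≤ finrank F (pspan π i) + ((j : ℤ) - i) * c := by
  induction j, hij using Nat.le_induction with
  | base => simp
  | succ j hij ih =>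
    have hstep := h (j + 1) (by omega) le_rfl
    rw [finrank_pspan_succ]
    push_cast
    linarith [ih fun l hil hlj => h l hil (by omega)]

theorem le_delta_of_add_mul_le_finrank_pspan {i j l : ℕ} {c : ℤ}
    (h : ∀ l, i < l → l ≤ j → (delta π l : ℤ) ≤ c)
    (hfull : (finrank F (pspan π i) : ℤ) + ((j : ℤ) - i) * c ≤ finrank F (pspan π j))
    (hil : i < l) (hlj : l ≤ j) : c ≤ delta π l := by
  obtain ⟨l, rfl⟩ : ∃ l', l = l' + 1 := ⟨l - 1, by omega⟩
  have hbefore := finrank_pspan_le_add_mul π (by omega : i ≤ l) fun l' h1 h2 => h l' h1 (by omega)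
  have hafter := finrank_pspan_le_add_mul π hlj fun l' h1 h2 => h l' (by omega) h2
  have hl := finrank_pspan_succ π l
  zify at hl
  push_cast at hafter
  linarith

theorem finrank_inf_pspan_add_le (W : Submodule F V) {j : ℕ} (h : j < n) :
    finrank F ↥(W ⊓ pspan π j) + finrank F ↥(W ⊓ π ⟨j, h⟩) ≤
      finrank F ↥(W ⊓ pspan π (j + 1)) + finrank F ↥(W ⊓ (π ⟨j, h⟩ ⊓ pspan π j)) := by
  rw [← Submodule.finrank_sup_add_finrank_inf_eq]
  refine add_le_add (Submodule.finrank_mono ?_) (Submodule.finrank_mono ?_)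
  · rw [pspan_succ_s5 π h]
    exact sup_le (inf_le_inf_left W le_sup_left) (inf_le_inf_left W le_sup_right)
  · rw [inf_inf_inf_comm, inf_idem, inf_comm (pspan π j)]

theorem le_finrank_inf_pspan {W C : Submodule F V} {ℓ M : ℕ} (hMn : M ≤ n)
    (hW : ∀ i : Fin n, (i : ℕ) < M → ℓ ≤ finrank F ↥(W ⊓ π i))
    (hC : ∀ i : Fin n, 1 ≤ (i : ℕ) → (i : ℕ) < M → π i ⊓ pspan π i ≤ C)
    (hWC : finrank F ↥(W ⊓ C) < ℓ) :
    ∀ j, j < M → ℓ + j ≤ finrank F ↥(W ⊓ pspan π (j + 1))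
  | 0, hM => by
    rw [pspan_one_s5 π (by omega)]
    simpa using hW ⟨0, by omega⟩ hM
  | j + 1, hM => by
    -- `π_{j+1}` meets the earlier span inside `C`, so it adds `≥ ℓ - dim (W ⊓ C) ≥ 1` dimensions
    have hstep := finrank_inf_pspan_add_le π W (by omega : j + 1 < n)
    have hmeet : finrank F ↥(W ⊓ (π ⟨j + 1, _⟩ ⊓ pspan π (j + 1))) ≤ finrank F ↥(W ⊓ C) :=
      Submodule.finrank_mono (inf_le_inf_left W (hC ⟨j + 1, by omega⟩ (by simp) hM))
    have := le_finrank_inf_pspan hMn hW hC hWC j (by omega)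
    have := hW ⟨j + 1, by omega⟩ hM
    omega

end PspanFinrank

section PairwiseMeeting

variable {n k t : ℕ} {π : Fin n → Submodule F V}

theorem delta_le (hdim : ∀ i, finrank F (π i) = k)
    (hmeet : ∀ i j, i ≠ j → k - t ≤ finrank F ↥(π i ⊓ π j)) {l : ℕ} (hl : 2 ≤ l) (hln : l ≤ n) :
    delta π l ≤ t := by
  obtain ⟨j, rfl⟩ : ∃ j, l = j + 1 := ⟨l - 1, by omega⟩
  have hsum : delta π (j + 1) + finrank F ↥(π ⟨j, hln⟩ ⊓ pspan π j) = finrank F (π ⟨j, hln⟩) :=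
    delta_succ_add_finrank_inf π ⟨j, hln⟩
  have hfirst := hmeet ⟨j, hln⟩ ⟨0, by omega⟩ (Fin.ne_of_val_ne (by simp; omega))
  have := Submodule.finrank_mono
    (inf_le_inf_left (π ⟨j, hln⟩) (le_pspan π (i := ⟨0, by omega⟩) (j := j) (by simp; omega)))
  rw [hdim] at hsum
  omega

theorem inf_pspan_le_of_le_delta (hdim : ∀ i, finrank F (π i) = k)
    (hmeet : ∀ i j, i ≠ j → k - t ≤ finrank F ↥(π i ⊓ π j)) {j a : Fin n}
    (ht : t ≤ delta π (j + 1)) (ha : (a : ℕ) < j) : π j ⊓ pspan π j ≤ π a := by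
  have hsum := delta_succ_add_finrank_inf π j
  have := hmeet j a (Fin.ne_of_val_ne (by omega))
  rw [hdim] at hsum
  have heq : π j ⊓ π a = π j ⊓ pspan π j :=
    Submodule.eq_of_le_of_finrank_le (inf_le_inf_left (π j) (le_pspan π ha)) (by omega)
  exact heq ▸ inf_le_right

theorem inf_pspan_le_of_inf_le_of_le_delta (hdim : ∀ i, finrank F (π i) = k)
    (hmeet : ∀ i j, i ≠ j → k - t ≤ finrank F ↥(π i ⊓ π j)) {C : Submodule F V} (h1n : 1 < n)
    (hC : π ⟨0, by omega⟩ ⊓ π ⟨1, h1n⟩ ≤ C) {j : Fin n} (hj : 1 ≤ (j : ℕ))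
    (ht : t ≤ delta π (j + 1)) : π j ⊓ pspan π j ≤ C := by
  refine (le_inf (inf_pspan_le_of_le_delta hdim hmeet ht (by simp; omega)) ?_).trans hC
  rcases hj.eq_or_lt with hj1 | hj1
  · exact inf_le_left.trans (le_of_eq (congrArg π (Fin.ext hj1.symm)))
  · exact inf_pspan_le_of_le_delta hdim hmeet ht hj1

theorem delta_succ_add_le (hdim : ∀ i, finrank F (π i) = k)
    (hmeet : ∀ i j, i ≠ j → k - t ≤ finrank F ↥(π i ⊓ π j)) {C : Submodule F V}
    (hCdim : finrank F C = k - t) {M : ℕ} (hM : 1 ≤ M)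
    (hC : ∀ i : Fin n, 1 ≤ (i : ℕ) → (i : ℕ) < M → π i ⊓ pspan π i ≤ C)
    {ρ : Fin n} (hMρ : M ≤ ρ) (hnot : ¬ C ≤ π ρ) :
    delta π (ρ + 1) + M ≤ t + 1 := by
  have hρC : finrank F ↥(π ρ ⊓ C) < k - t :=
    hCdim ▸ Submodule.finrank_lt_finrank_of_lt (inf_lt_right.mpr hnot)
  have hchain := le_finrank_inf_pspan π (by omega)
    (fun i hi => hmeet ρ i (Fin.ne_of_val_ne (by omega))) hC hρC (M - 1) (by omega)
  have := Submodule.finrank_mono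
    (inf_le_inf_left (π ρ) (pspan_mono_s5 π (show M - 1 + 1 ≤ ρ by omega)))
  have hsum := delta_succ_add_finrank_inf π ρ
  rw [hdim] at hsum
  omega

end PairwiseMeeting

theorem finrank_pspan_le_of_antitoneOn_delta {n k t1 t2 M s r : ℕ} {π : Fin n → Submodule F V}
    (ht : t2 < t1) (hfirst : finrank F (pspan π 1) = k) (hanti : AntitoneOn (delta π) (Set.Icc 2 n))
    (hle : ∀ l, 2 ≤ l → l ≤ n → delta π l ≤ t1) (hM : 2 ≤ M) (hMs : M < s) (hsr : s < r)
    (hrn : r ≤ n) (hdropM : delta π (M + 1) < t1) (hdrops : delta π s ≤ t2)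
    (hdropr : delta π r + M ≤ t1 + 1) :
    (finrank F (pspan π n) : ℤ) ≤ k + ((n : ℤ) - 1) * (t1 - 1) - (t1 - t2) + 2 := by
  have hanti' : ∀ {i l}, 2 ≤ i → i ≤ l → l ≤ n → delta π l ≤ delta π i := fun hi hil hln =>
    hanti ⟨hi, by omega⟩ ⟨by omega, hln⟩ hil
  have b1 := finrank_pspan_le_add_mul π (i := 1) (j := M) (c := t1) (by omega)
    fun l h1 h2 => by have := hle l h1 (by omega); omega
  have b2 := finrank_pspan_le_add_mul π (i := M) (j := s - 1) (c := t1 - 1) (by omega)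
    fun l h1 h2 => by have := hanti' (i := M + 1) (l := l) (by omega) h1 (by omega); omega
  have b3 := finrank_pspan_le_add_mul π (i := s - 1) (j := r - 1) (c := t2) (by omega)
    fun l h1 h2 => by have := hanti' (i := s) (l := l) (by omega) (by omega) (by omega); omega
  have b4 := finrank_pspan_le_add_mul π (i := r - 1) (j := n) (c := delta π r) (by omega)
    fun l h1 h2 => by have := hanti' (i := r) (l := l) (by omega) (by omega) h2; omega
  rw [hfirst, Nat.cast_one] at b1
  push_cast [Nat.cast_sub (by omega : 1 ≤ s), Nat.cast_sub (by omega : 1 ≤ r)] at b2 b3 b4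
  have hdr : (delta π r : ℤ) + M ≤ t1 + 1 := by exact_mod_cast hdropr
  linarith [mul_nonneg (by omega : (0 : ℤ) ≤ r - s - 1) (by omega : (0 : ℤ) ≤ t1 - 1 - t2),
    mul_nonneg (by omega : (0 : ℤ) ≤ n - r) (by omega : (0 : ℤ) ≤ t1 - 1 - delta π r)]

theorem exists_last_maximal_delta {n k t m s : ℕ} {π : Fin n → Submodule F V}
    (hfirst : finrank F (pspan π 1) = k) (hle : ∀ l, 2 ≤ l → l ≤ n → delta π l ≤ t)
    (hmax : (k : ℤ) + ((m : ℤ) - 1) * t ≤ finrank F (pspan π m)) (hms : m < s)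
    (hsn : s ≤ n) (hs : delta π s < t) :
    ∃ M, m ≤ M ∧ M < s ∧ delta π (M + 1) < t ∧ ∀ j, 1 ≤ j → j < M → t ≤ delta π (j + 1) := by
  have hfull : ∀ j, 1 ≤ j → j < m → t ≤ delta π (j + 1) := fun j h1j hjm => by
    have := le_delta_of_add_mul_le_finrank_pspan π (i := 1) (j := m) (l := j + 1) (c := t)
      (fun l h1 h2 => by have := hle l h1 (by omega); omega) (by rwa [hfirst]) (by omega)
      (by omega)
    omega
  classical
  have hs' : m ≤ s - 1 ∧ delta π (s - 1 + 1) < t :=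
    ⟨by omega, by rwa [Nat.sub_add_cancel (by omega : 1 ≤ s)]⟩
  have hex : ∃ j, m ≤ j ∧ delta π (j + 1) < t := ⟨s - 1, hs'⟩
  obtain ⟨hmM, hdrop⟩ := Nat.find_spec hex
  refine ⟨Nat.find hex, hmM, ?_, hdrop, fun j h1j hjM => ?_⟩
  · have := Nat.find_min' hex hs'
    omega
  · rcases lt_or_ge j m with hjm | hmj
    · exact hfull j h1j hjm
    · exact not_lt.mp fun h => Nat.find_min hex hjM ⟨hmj, h⟩

/-- Remark 2.2 (improved bound): with a non-increasing array, a maximal sunflower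
`π_1,…,π_m`, an index `s` with `m < s < r ≤ n` and `δ_s ≤ t₂`, and `π_r` not through
the center, the span has dimension at most `k + (n-1)(t₁-1) - (t₁-t₂) + 2`.
(Indices `r`, `s` are 1-based.) -/
theorem statement5 {n k t1 t2 m r s : ℕ} (h2 : t2 < t1) (h3 : t1 < k)
    (π : Fin n → Submodule F V) (hS : IsSPID k {k - t1, k - t2} π)
    (hdec : ∀ j, 2 ≤ j → j < n → delta π (j + 1) ≤ delta π j)
    (hm : 2 ≤ m)
    (V' : Submodule F V) (hV' : finrank F ↥V' = k - t1)
    (hcenter : ∀ i j : Fin n, (i : ℕ) < m → (j : ℕ) < m → i ≠ j → π i ⊓ π j = V')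
    (hmax : finrank F ↥(pspan π m) = (k - t1) + m * t1)
    (hms : m < s) (hsr : s < r) (hrn : r ≤ n)
    (hnot : ¬ V' ≤ π ⟨r - 1, by omega⟩)
    (hs : delta π s ≤ t2) :
    (finrank F ↥(⨆ i, π i) : ℤ) ≤
      (k : ℤ) + ((n : ℤ) - 1) * ((t1 : ℤ) - 1) - ((t1 : ℤ) - (t2 : ℤ)) + 2 := by
  have hdim := hS.2.1
  have hmeet : ∀ i j, i ≠ j → k - t1 ≤ finrank F ↥(π i ⊓ π j) := fun i j =>
    hS.le_finrank_inf (by rintro x (rfl | rfl) <;> omega)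
  have hfirst : finrank F (pspan π 1) = k := by rw [pspan_one_s5 π (by omega), hdim]
  have hle : ∀ l, 2 ≤ l → l ≤ n → delta π l ≤ t1 := fun l => delta_le hdim hmeet
  obtain ⟨M, hmM, hMs, hdropM, hfullM⟩ := exists_last_maximal_delta hfirst hle
    (by rw [hmax]; push_cast [Nat.cast_sub h3.le]; linarith) hms (by omega) (by omega)
  have hC : ∀ i : Fin n, 1 ≤ (i : ℕ) → (i : ℕ) < M → π i ⊓ pspan π i ≤ V' := fun i h1 hiM =>
    inf_pspan_le_of_inf_le_of_le_delta hdim hmeet (by omega)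
      (hcenter _ _ (by simp; omega) (by simp; omega) (Fin.ne_of_val_ne (by simp))).le h1
      (hfullM i h1 hiM)
  have hdropr := delta_succ_add_le hdim hmeet hV' (by omega) hC (ρ := ⟨r - 1, by omega⟩)
    (by simp; omega) hnot
  simp only [Nat.sub_add_cancel (by omega : 1 ≤ r)] at hdropr
  rw [iSup_eq_pspan]
  exact finrank_pspan_le_of_antitoneOn_delta h2 hfirst
    (antitoneOn_of_add_one_le Set.ordConnected_Icc fun j _ hj hj1 => hdec j hj.1 hj1.2)
    hle (by omega) hMs hsr hrn hdropM hs hdropr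
end

section
/- Let k, t, m, n be integers with 2 ≤ t ≤ k−1, 2 < m ≤ min{t+1, n−1} and n ≥ m + 2, and let V be a vector space over a field with dim V ≥ k + (n−1)(t−1) + 1. Then there exists a (k; k−t, k−t+1)-SPID S in V with |S| = n which is not a (k−t)-junta, contains a (k−t)-sunflower of maximal dimension with m petals, and satisfies dim⟨S⟩ = k + (n−1)(t−1) + 1. -/
open Module

variable {F : Type*} [Field F] {V : Type*} [AddCommGroup V] [Module F V]
  [FiniteDimensional F V]

/-!
Take linearly independent vectors indexed by a finite set of points and let every member be the
span of a block of points: dimensions of intersections and spans become cardinalities of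
intersections and unions of blocks. With `ℓ = k - t = c + 1`, the points are a core of `c` points,
two points `a = true` and `b = false`, the `t` outer points of the last member (`m - 1` of them
shared with one petal each) and `t - 1` private points of every other member. The members are
`m - 1` petals (`some (.inl r)`: core, `a`, an outer point, private points), `n - m` hubs
(`some (.inr j)`: core, `a`, `b`, private points) and the last member (`none`: core, `b`, all outer
points). The petals and one hub form a sunflower with centre core + `a`, two hubs meet in `ℓ + 1`
points, any other two members in `ℓ` points, and a petal, a hub and the last member meet only in
the `ℓ - 1` core points, so no `ℓ`-dimensional subspace lies in every member.
-/

open Submodule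

section LinearIndependent

variable {R M ι : Type*} [Ring R] [AddCommGroup M] [Module R M] {f : ι → M}

theorem LinearIndependent.span_image_inf_span_image (hf : LinearIndependent R f) (s u : Set ι) :
    span R (f '' s) ⊓ span R (f '' u) = span R (f '' (s ∩ u)) := by
  refine le_antisymm (fun x ⟨hs, hu⟩ => ?_)
    (le_inf (span_mono (Set.image_mono Set.inter_subset_left))
      (span_mono (Set.image_mono Set.inter_subset_right)))
  obtain ⟨l, hl, rfl⟩ := (Finsupp.mem_span_image_iff_linearCombination R).1 hs
  obtain ⟨l', hl', hll'⟩ := (Finsupp.mem_span_image_iff_linearCombination R).1 hu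
  rw [hf hll'] at hl'
  refine (Finsupp.mem_span_image_iff_linearCombination R).2 ⟨l, ?_, rfl⟩
  rw [Finsupp.supported_inter]
  exact ⟨hl, hl'⟩

theorem LinearIndependent.finrank_span_image_finset [StrongRankCondition R]
    (hf : LinearIndependent R f) (s : Finset ι) :
    finrank R (span R (f '' s)) = s.card := by
  classical
  have := nontrivial_of_invariantBasisNumber R
  rw [← Finset.coe_image, finrank_span_finset_eq_card, Finset.card_image_of_injective _ hf.injective]
  simpa only [Finset.coe_image] using (hf.linearIndepOn _).id_image

theorem Finset.sup_span_image {κ : Type*} [DecidableEq ι] (s : Finset κ) (A : κ → Finset ι) :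
    s.sup (fun x => span R (f '' A x)) = span R (f '' (s.biUnion A)) := by
  simp only [Finset.coe_biUnion, Set.image_iUnion₂, span_iUnion₂, Finset.sup_eq_iSup,
    Finset.mem_coe]

theorem exists_linearIndependent_of_card_le_finrank [StrongRankCondition R] [Fintype ι]
    (h : Fintype.card ι ≤ finrank R M) : ∃ f : ι → M, LinearIndependent R f := by
  obtain ⟨g, hg⟩ := exists_linearIndependent_of_le_finrank h
  exact ⟨g ∘ Fintype.equivFin ι, hg.comp _ (Fintype.equivFin ι).injective⟩

end LinearIndependent

theorem Finset.disjSum_inter_disjSum {α β : Type*} [DecidableEq α] [DecidableEq β]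
    (s s' : Finset α) (u u' : Finset β) :
    s.disjSum u ∩ s'.disjSum u' = (s ∩ s').disjSum (u ∩ u') := by
  ext (x | x) <;> simp

open Finset

namespace ClassOne

abbrev Point (c t m n : ℕ) : Type :=
  Fin c ⊕ Bool ⊕ (Fin (m - 1) ⊕ Fin (t + 1 - m)) ⊕ ((Fin (m - 1) ⊕ Fin (n - m)) × Fin (t - 1))

-- The default size limit of instance search is too small for this nested sum.
set_option synthInstance.maxSize 256 in
instance (c t m n : ℕ) : DecidableEq (Point c t m n) := inferInstance

abbrev Member (m n : ℕ) : Type := Option (Fin (m - 1) ⊕ Fin (n - m))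

variable {m n : ℕ} (c t : ℕ)

def block : Member m n → Finset (Point c t m n)
  | none => disjSum univ (disjSum {false} (disjSum univ ∅))
  | some (.inl r) => disjSum univ (disjSum {true} (disjSum {.inl r} ({.inl r} ×ˢ univ)))
  | some (.inr j) => disjSum univ (disjSum univ (disjSum ∅ ({.inr j} ×ˢ univ)))

def center : Finset (Point c t m n) := disjSum univ (disjSum {true} ∅)

def petals (j : Fin (n - m)) : Finset (Member m n) :=
  insert (some (.inr j)) (univ.image (some ∘ .inl))

variable {c t}

theorem card_point (hm : 1 ≤ m) (hmt : m ≤ t + 1) (hmn : m ≤ n) :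
    Fintype.card (Point c t m n) = c + t + 1 + (n - 1) * (t - 1) + 1 := by
  have h1 : m - 1 + (t + 1 - m) = t := by omega
  have h2 : m - 1 + (n - m) = n - 1 := by omega
  simp only [Fintype.card_sum, Fintype.card_prod, Fintype.card_fin, Fintype.card_bool, h1, h2]
  ring

theorem card_member (hm : 1 ≤ m) (hmn : m ≤ n) : Fintype.card (Member m n) = n := by
  simp only [Fintype.card_option, Fintype.card_sum, Fintype.card_fin]
  omega

theorem card_block (hm : 1 ≤ m) (hmt : m ≤ t + 1) (ht : 1 ≤ t) (x : Member m n) :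
    (block c t x).card = c + t + 1 := by
  rcases x with _ | r | j <;> simp [block] <;> omega

theorem card_block_inter_block {x y : Member m n} (hxy : x ≠ y) :
    (block c t x ∩ block c t y).card = c + 1 ∨ (block c t x ∩ block c t y).card = c + 2 := by
  rcases x with _ | r | j <;> rcases y with _ | r' | j' <;>
    simp_all [block, disjSum_inter_disjSum, product_inter_product,
      -disjSum_empty, -empty_disjSum, -singleton_product]

theorem card_block_petal_inter_block_last (r : Fin (m - 1)) :
    (block c t (some (.inl r) : Member m n) ∩ block c t none).card = c + 1 := by
  simp [block, disjSum_inter_disjSum, -disjSum_empty, -empty_disjSum, -singleton_product]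

theorem card_block_hub_inter_block_hub {j j' : Fin (n - m)} (hj : j ≠ j') :
    (block c t (some (.inr j)) ∩ block c t (some (.inr j'))).card = c + 2 := by
  simp [block, disjSum_inter_disjSum, product_inter_product, hj,
      -disjSum_empty, -empty_disjSum, -singleton_product]

theorem card_block_petal_inter_block_hub_inter_block_last (r : Fin (m - 1)) (j : Fin (n - m)) :
    (block c t (some (.inl r) : Member m n) ∩ block c t (some (.inr j)) ∩
      block c t none).card = c := by
  simp [block, disjSum_inter_disjSum, product_inter_product,
      -disjSum_empty, -empty_disjSum, -singleton_product]

theorem card_center : (center c t : Finset (Point c t m n)).card = c + 1 := by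
  simp [center, -disjSum_empty]

theorem block_inter_block_of_mem_petals {j : Fin (n - m)} {x y : Member m n}
    (hx : x ∈ petals j) (hy : y ∈ petals j) (hxy : x ≠ y) :
    block c t x ∩ block c t y = center c t := by
  simp only [petals, mem_insert, mem_image, mem_univ, true_and, Function.comp_apply] at hx hy
  rcases hx with rfl | ⟨r, rfl⟩ <;> rcases hy with rfl | ⟨r', rfl⟩ <;>
    simp_all [block, center, disjSum_inter_disjSum, product_inter_product,
      -disjSum_empty, -empty_disjSum, -singleton_product]

theorem card_petals (hm : 1 ≤ m) (j : Fin (n - m)) : (petals j).card = m := by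
  rw [petals, card_insert_of_notMem (by simp), card_image_of_injective _
    ((Option.some_injective _).comp Sum.inl_injective), card_univ, Fintype.card_fin]
  omega

theorem card_biUnion_petals (hm : 1 ≤ m) (ht : 1 ≤ t) (j : Fin (n - m)) :
    ((petals j).biUnion (block c t)).card = c + 1 + m * t := by
  have h : (petals j).biUnion (block c t) =
      disjSum univ (disjSum univ (disjSum (disjSum univ ∅) ((disjSum univ {j}) ×ˢ univ))) := by
    ext (_ | _ | (_ | _) | ⟨_ | _, _⟩) <;>
      simp [petals, block, -disjSum_empty, -empty_disjSum, -singleton_product]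
  rw [h]
  simp only [card_disjSum, card_univ, card_empty, card_product, card_singleton, Fintype.card_fin,
    Fintype.card_bool]
  obtain ⟨m, rfl⟩ : ∃ m', m = m' + 1 := ⟨m - 1, by omega⟩
  obtain ⟨t, rfl⟩ : ∃ t', t = t' + 1 := ⟨t - 1, by omega⟩
  simp only [Nat.add_sub_cancel]
  ring

theorem biUnion_block (hmn : m < n) : univ.biUnion (block c t : Member m n → _) = univ := by
  refine eq_univ_of_forall fun p => mem_biUnion.2 ?_
  rcases p with _ | ⟨_ | _⟩ | _ | ⟨r | j, _⟩
  · exact ⟨none, by simp [block]⟩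
  · exact ⟨none, by simp [block]⟩
  · exact ⟨some (.inr ⟨0, by omega⟩), by simp [block]⟩
  · exact ⟨none, by simp [block]⟩
  · exact ⟨some (.inl r), by simp [block]⟩
  · exact ⟨some (.inr j), by simp [block]⟩

section Subspaces

variable (K : Type*) {W : Type*} [Field K] [AddCommGroup W] [Module K W]

def subspace (f : Point c t m n → W) (x : Member m n) : Submodule K W :=
  span K (f '' block c t x)

variable {K} {f : Point c t m n → W}

theorem finset_sup_subspace (s : Finset (Member m n)) :
    s.sup (subspace K f) = span K (f '' ↑(s.biUnion (block c t))) :=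
  sup_span_image s (block c t)

variable (hf : LinearIndependent K f)
include hf

theorem subspace_inf_subspace (x y : Member m n) :
    subspace K f x ⊓ subspace K f y = span K (f '' ↑(block c t x ∩ block c t y)) := by
  rw [subspace, subspace, hf.span_image_inf_span_image, coe_inter]

theorem finrank_subspace_inf_subspace (x y : Member m n) :
    finrank K ↥(subspace K f x ⊓ subspace K f y) = (block c t x ∩ block c t y).card := by
  rw [subspace_inf_subspace hf, hf.finrank_span_image_finset]

theorem finrank_subspace (hm : 1 ≤ m) (hmt : m ≤ t + 1) (ht : 1 ≤ t) (x : Member m n) :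
    finrank K ↥(subspace K f x) = c + t + 1 := by
  rw [subspace, hf.finrank_span_image_finset, card_block hm hmt ht]

theorem subspace_injective (hm : 1 ≤ m) (hmt : m ≤ t + 1) (ht : 2 ≤ t) :
    Function.Injective (subspace K f) := by
  intro x y hxy
  by_contra hne
  have h := finrank_subspace_inf_subspace hf x y
  rw [hxy, inf_idem, finrank_subspace hf hm hmt (by omega)] at h
  rcases card_block_inter_block (c := c) (t := t) hne with h' | h' <;> omega

theorem isSPID_subspace_comp (hm : 2 ≤ m) (hmt : m ≤ t + 1) (ht : 2 ≤ t) (hmn : m + 2 ≤ n)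
    (e : Fin n ≃ Member m n) :
    IsSPID (c + t + 1) {c + 1, c + 1 + 1} (subspace K f ∘ e) := by
  refine ⟨(subspace_injective hf (by omega) hmt ht).comp e.injective,
    fun i => finrank_subspace hf (by omega) hmt (by omega) (e i), fun i j hij => ?_, ?_⟩
  · simp only [Function.comp_apply, finrank_subspace_inf_subspace hf]
    simpa using card_block_inter_block (c := c) (t := t) (e.injective.ne hij)
  · simp only [Set.mem_insert_iff, Set.mem_singleton_iff, forall_eq_or_imp, forall_eq]
    constructor
    · refine ⟨e.symm (some (.inl ⟨0, by omega⟩)), e.symm none, by simp, ?_⟩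
      simp [finrank_subspace_inf_subspace hf, card_block_petal_inter_block_last]
    · refine ⟨e.symm (some (.inr ⟨0, by omega⟩)), e.symm (some (.inr ⟨1, by omega⟩)), by simp, ?_⟩
      simp [finrank_subspace_inf_subspace hf, card_block_hub_inter_block_hub]

theorem not_isJunta_subspace_comp [FiniteDimensional K W] (hm : 2 ≤ m) (hmn : m < n)
    (e : Fin n ≃ Member m n) :
    ¬ IsJunta (c + 1) (subspace K f ∘ e) := by
  rintro ⟨C, hC, hle⟩
  have hle' (x : Member m n) : C ≤ subspace K f x := by simpa using hle (e.symm x)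
  have hC' := Submodule.finrank_mono (le_inf (le_inf (hle' (some (.inl ⟨0, by omega⟩)))
    (hle' (some (.inr ⟨0, by omega⟩)))) (hle' none))
  rw [subspace_inf_subspace hf, subspace, hf.span_image_inf_span_image, ← coe_inter,
    hf.finrank_span_image_finset, card_block_petal_inter_block_hub_inter_block_last, hC] at hC'
  omega

theorem hasMaxSunflower_range_subspace_comp (hm : 1 ≤ m) (hmt : m ≤ t + 1) (ht : 2 ≤ t)
    (hmn : m < n) (e : Fin n ≃ Member m n) :
    HasMaxSunflower (c + t + 1) (c + 1) m (Set.range (subspace K f ∘ e)) := by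
  classical
  set j : Fin (n - m) := ⟨0, by omega⟩
  refine ⟨(petals j).image (subspace K f), ?_, ?_,
    span K (f '' (center c t : Finset (Point c t m n))), ?_, ?_, ?_⟩
  · rw [coe_image, EquivLike.range_comp]
    exact Set.image_subset_range _ _
  · rw [card_image_of_injective _ (subspace_injective hf hm hmt ht), card_petals hm]
  · rw [hf.finrank_span_image_finset, card_center]
  · simp only [mem_image]
    rintro _ ⟨x, hx, rfl⟩ _ ⟨y, hy, rfl⟩ hxy
    rw [subspace_inf_subspace hf, block_inter_block_of_mem_petals hx hy (ne_of_apply_ne _ hxy)]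
  · rw [sup_image, Function.id_comp, finset_sup_subspace, hf.finrank_span_image_finset,
      card_biUnion_petals hm (by omega), show c + t + 1 - (c + 1) = t by omega]

theorem finrank_iSup_subspace_comp (hmn : m < n) (e : Fin n ≃ Member m n) :
    finrank K ↥(⨆ i, (subspace K f ∘ e) i) = Fintype.card (Point c t m n) := by
  rw [show (⨆ i, (subspace K f ∘ e) i) = ⨆ x, subspace K f x from e.iSup_comp,
    ← Finset.sup_univ_eq_iSup, finset_sup_subspace, biUnion_block hmn,
    hf.finrank_span_image_finset, card_univ]

end Subspaces

end ClassOne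

open ClassOne in
theorem statement10_general {n k t m : ℕ} (ht2 : 2 ≤ t) (htk : t + 1 ≤ k)
    (hm1 : 2 < m) (hm2 : m ≤ t + 1) (hn : m + 2 ≤ n)
    (hdimV : k + (n - 1) * (t - 1) + 1 ≤ finrank F V) :
    ∃ π : Fin n → Submodule F V,
      IsSPID k {k - t, k - t + 1} π ∧ ¬ IsJunta (k - t) π ∧
      HasMaxSunflower k (k - t) m (Set.range π) ∧
      finrank F ↥(⨆ i, π i) = k + (n - 1) * (t - 1) + 1 := by
  obtain ⟨c, rfl⟩ : ∃ c, k = c + t + 1 := ⟨k - t - 1, by omega⟩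
  have hpoint : Fintype.card (Point c t m n) = c + t + 1 + (n - 1) * (t - 1) + 1 :=
    card_point (by omega) hm2 (by omega)
  obtain ⟨f, hf⟩ := exists_linearIndependent_of_card_le_finrank (R := F) (hpoint ▸ hdimV)
  have e : Fin n ≃ Member m n := Fintype.equivOfCardEq
    (by rw [Fintype.card_fin, card_member (by omega) (by omega)])
  rw [show c + t + 1 - t = c + 1 by omega]
  exact ⟨_, isSPID_subspace_comp hf (by omega) hm2 ht2 hn e,
    not_isJunta_subspace_comp hf (by omega) (by omega) e,
    hasMaxSunflower_range_subspace_comp hf (by omega) hm2 ht2 (by omega) e,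
    by rw [finrank_iSup_subspace_comp hf (by omega) e, hpoint]⟩

/-- Existence of Class I examples: a non-junta `(k; k-t, k-t+1)`-SPID with `n` members,
containing a `(k-t)`-sunflower of maximal dimension with `m` petals, and spanning a
subspace of dimension `k + (n-1)(t-1) + 1`. -/
theorem statement10 {n k t m : ℕ} (ht2 : 2 ≤ t) (htk : t + 1 ≤ k)
    (hm1 : 2 < m) (hm2 : m ≤ t + 1) (hm3 : m ≤ n - 1) (hn : m + 2 ≤ n)
    (hdimV : k + (n - 1) * (t - 1) + 1 ≤ finrank F V) :
    ∃ π : Fin n → Submodule F V,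
      IsSPID k {k - t, k - t + 1} π ∧ ¬ IsJunta (k - t) π ∧
      HasMaxSunflower k (k - t) m (Set.range π) ∧
      finrank F ↥(⨆ i, π i) = k + (n - 1) * (t - 1) + 1 :=
  statement10_general ht2 htk hm1 hm2 hn hdimV
end

section
/- Let k, t, n be integers with 2 ≤ t ≤ k−1 and n ≥ 4, and let V be a vector space over a field with dim V ≥ k + (n−1)(t−1) + 1. Then there exists a (k; k−t, k−t+1)-SPID S = {π1, …, πn} in V of Class II, namely: there exist a (k−t+1)-dimensional subspace W, two distinct (k−t)-dimensional subspaces W1, W2 ≤ W, t-dimensional subspaces X1, X2 with dim⟨X1, X2⟩ = 2t−1, and (t−1)-dimensional subspaces M_3, …, M_n such that W, ⟨X1, X2⟩, M_3, …, M_n are linearly independent and S = {⟨W1, X1⟩, ⟨W2, X2⟩, ⟨W, M_3⟩, …, ⟨W, M_n⟩}. Such an S is not a (k−t)-junta and satisfies dim⟨S⟩ = k + (n−1)(t−1) + 1. -/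
open Module

variable {F : Type*} [Field F] {V : Type*} [AddCommGroup V] [Module F V]
  [FiniteDimensional F V]

/-- Class II configurations (with the two `(k-t)`-spaces `W₁ ≠ W₂` distinct). -/
def IsClassII (k t n : ℕ) (S : Set (Submodule F V)) : Prop :=
  ∃ (W W1 W2 X1 X2 : Submodule F V) (M : Fin (n - 2) → Submodule F V),
    finrank F ↥W = k - t + 1 ∧ W1 ≤ W ∧ W2 ≤ W ∧ W1 ≠ W2 ∧
    finrank F ↥W1 = k - t ∧ finrank F ↥W2 = k - t ∧
    finrank F ↥X1 = t ∧ finrank F ↥X2 = t ∧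
    finrank F ↥(X1 ⊔ X2) = 2 * t - 1 ∧
    (∀ j, finrank F ↥(M j) = t - 1) ∧
    finrank F ↥(W ⊔ (X1 ⊔ X2) ⊔ ⨆ j, M j) =
      (k - t + 1) + (2 * t - 1) + (n - 2) * (t - 1) ∧
    S = {W1 ⊔ X1, W2 ⊔ X2} ∪ Set.range fun j => W ⊔ M j


open Module

namespace SPIDAux

variable (F : Type*) [Field F] {V : Type*} [AddCommGroup V] [Module F V]
  [FiniteDimensional F V]

variable {D : ℕ}

/-- span of the basis vectors indexed by a finset of naturals -/
def Phi (v : Fin D → V) (s : Finset ℕ) : Submodule F V :=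
  Submodule.span F (v '' {i : Fin D | (i : ℕ) ∈ s})

theorem Phi_mono (v : Fin D → V) {s t : Finset ℕ} (h : s ⊆ t) : Phi F v s ≤ Phi F v t :=
  Submodule.span_mono (Set.image_mono fun i hi => h hi)

theorem Phi_sup (v : Fin D → V) (s t : Finset ℕ) :
    Phi F v s ⊔ Phi F v t = Phi F v (s ∪ t) := by
  rw [Phi, Phi, Phi, ← Submodule.span_union, ← Set.image_union]
  congr 2
  ext i; simp

theorem Phi_iSup (v : Fin D → V) {ι : Type*} [Fintype ι] (f : ι → Finset ℕ) :
    (⨆ i, Phi F v (f i)) = Phi F v (Finset.univ.biUnion f) := by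
  simp only [Phi]
  rw [← Submodule.span_iUnion, ← Set.image_iUnion]
  congr 2
  ext i; simp

variable {F}

theorem mem_Phi {v : Fin D → V} (hv : LinearIndependent F v) (s : Finset ℕ) (i : Fin D) :
    v i ∈ Phi F v s ↔ (i : ℕ) ∈ s := by
  constructor
  · intro h
    by_contra hi
    exact hv.notMem_span_image (s := {j : Fin D | (j : ℕ) ∈ s}) hi h
  · intro h
    exact Submodule.subset_span ⟨i, h, rfl⟩

theorem finrank_Phi {v : Fin D → V} (hv : LinearIndependent F v) {s : Finset ℕ}
    (hs : ∀ x ∈ s, x < D) : finrank F (Phi F v s : Submodule F V) = s.card := by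
  classical
  have h1 : LinearIndependent F (fun i : {j : Fin D // (j : ℕ) ∈ s} => v i) :=
    hv.comp _ Subtype.val_injective
  have h2 : Set.range (fun i : {j : Fin D // (j : ℕ) ∈ s} => v i)
      = v '' {i : Fin D | (i : ℕ) ∈ s} := by
    ext x; simp [Set.mem_image]
  have h3 := finrank_span_eq_card (R := F) h1
  rw [h2] at h3
  rw [Phi, h3, Fintype.card_subtype]
  have h4 : ((Finset.univ.filter fun i : Fin D => (i : ℕ) ∈ s).image Fin.val) = s := by
    ext x
    simp only [Finset.mem_image, Finset.mem_filter, Finset.mem_univ, true_and]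
    constructor
    · rintro ⟨i, hi, rfl⟩; exact hi
    · intro hx; exact ⟨⟨x, hs x hx⟩, hx, rfl⟩
  conv_rhs => rw [← h4]
  rw [Finset.card_image_of_injective _ Fin.val_injective]

theorem finrank_inf {v : Fin D → V} (hv : LinearIndependent F v) {s t : Finset ℕ}
    (hs : ∀ x ∈ s, x < D) (ht : ∀ x ∈ t, x < D) :
    finrank F ((Phi F v s ⊓ Phi F v t : Submodule F V) : Submodule F V)
      = s.card + t.card - (s ∪ t).card := by
  have h := Submodule.finrank_sup_add_finrank_inf_eq (Phi F v s) (Phi F v t : Submodule F V)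
  rw [Phi_sup, finrank_Phi hv hs, finrank_Phi hv ht] at h
  rw [finrank_Phi hv (s := s ∪ t) (fun x hx => by
    rcases Finset.mem_union.1 hx with h' | h'
    · exact hs x h'
    · exact ht x h')] at h
  omega

end SPIDAux


namespace SPIDAux

theorem disj_Ico {a b c d : ℕ} (h : b ≤ c) :
    Disjoint (Finset.Ico a b) (Finset.Ico c d) := by
  rw [Finset.disjoint_left]
  intro x hx hx'
  simp only [Finset.mem_Ico] at hx hx'
  omega

theorem card2 {x y z w : ℕ} (h : y ≤ z) :
    ((Finset.Ico x y) ∪ (Finset.Ico z w)).card = (y - x) + (w - z) := by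
  rw [Finset.card_union_of_disjoint (disj_Ico h), Nat.card_Ico, Nat.card_Ico]

theorem card3 {x y z w u t : ℕ} (h1 : y ≤ z) (h2 : w ≤ u) (h3 : y ≤ u) :
    ((Finset.Ico x y) ∪ (Finset.Ico z w) ∪ (Finset.Ico u t)).card
      = (y - x) + (w - z) + (t - u) := by
  rw [Finset.card_union_of_disjoint, card2 h1, Nat.card_Ico]
  rw [Finset.disjoint_union_left]
  exact ⟨disj_Ico h3, disj_Ico h2⟩

theorem biUnion_Ico (c0 c : ℕ) : ∀ p : ℕ,
    (Finset.range p).biUnion (fun j => Finset.Ico (c0 + j*c) (c0 + j*c + c))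
      = Finset.Ico c0 (c0 + p*c)
  | 0 => by simp
  | (p+1) => by
    rw [Finset.range_add_one, Finset.biUnion_insert, biUnion_Ico c0 c p]
    rw [Finset.union_comm, Finset.Ico_union_Ico_eq_Ico]
    · congr 1
      rw [Nat.succ_mul]
      omega
    · exact Nat.le_add_right _ _
    · have : p * c + c = (p+1)*c := (Nat.succ_mul p c).symm
      omega

theorem biUnion_fin (p : ℕ) (f : ℕ → Finset ℕ) :
    (Finset.univ : Finset (Fin p)).biUnion (fun i => f (i : ℕ))
      = (Finset.range p).biUnion f := by
  ext x
  simp [Finset.mem_biUnion, Fin.exists_iff]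

/-! index sets -/

def A0 (a b : ℕ) : Finset ℕ := Finset.Ico 0 (b+1) ∪ Finset.Ico (b+2) (a+b+4)
def A1 (a b : ℕ) : Finset ℕ := Finset.Ico 1 (b+2) ∪ Finset.Ico (a+b+3) (2*a+b+5)
def Wf (b : ℕ) : Finset ℕ := Finset.Ico 0 (b+2)
def Ms (a b j : ℕ) : Finset ℕ :=
  Finset.Ico (2*a+b+5 + j*(a+1)) (2*a+b+5 + j*(a+1) + (a+1))

def Ib (a b : ℕ) (i : ℕ) : Finset ℕ :=
  if i = 0 then A0 a b else if i = 1 then A1 a b else Wf b ∪ Ms a b (i-2)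

theorem Ib_zero (a b : ℕ) : Ib a b 0 = A0 a b := rfl
theorem Ib_one (a b : ℕ) : Ib a b 1 = A1 a b := rfl
theorem Ib_two (a b j : ℕ) : Ib a b (j+2) = Wf b ∪ Ms a b j := by
  simp [Ib]

theorem card_A0 (a b : ℕ) : (A0 a b).card = a+b+3 := by
  rw [A0, card2 (by omega)]; omega
theorem card_A1 (a b : ℕ) : (A1 a b).card = a+b+3 := by
  rw [A1, card2 (by omega)]; omega
theorem card_WM (a b j : ℕ) : (Wf b ∪ Ms a b j).card = a+b+3 := by
  have h : 2*a+b+5 ≤ 2*a+b+5 + j*(a+1) := Nat.le_add_right _ _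
  rw [Wf, Ms, card2 (by omega)]; omega

theorem card_Ib (a b i : ℕ) : (Ib a b i).card = a+b+3 := by
  rcases Nat.lt_or_ge i 2 with h | h
  · interval_cases i
    · rw [Ib_zero]; exact card_A0 a b
    · rw [Ib_one]; exact card_A1 a b
  · obtain ⟨j, rfl⟩ : ∃ j, i = j + 2 := ⟨i - 2, by omega⟩
    rw [Ib_two]; exact card_WM a b j

theorem Ms_anchor (a b j : ℕ) : 2*a+b+5 + j*(a+1) ≥ 2*a+b+5 := Nat.le_add_right _ _

theorem Ms_le (a b : ℕ) {i j : ℕ} (h : i < j) :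
    2*a+b+5 + i*(a+1) + (a+1) ≤ 2*a+b+5 + j*(a+1) := by
  have : i*(a+1) + (a+1) ≤ j*(a+1) := by
    rw [← Nat.succ_mul]; exact Nat.mul_le_mul_right _ h
  omega

theorem bound_Ib (a b m : ℕ) {i : ℕ} (hi : i ≤ m+3) :
    ∀ x ∈ Ib a b i, x < 2*a+b+5 + (m+2)*(a+1) := by
  intro x hx
  have hanchor : (0:ℕ) ≤ 0 := le_refl 0
  rcases Nat.lt_or_ge i 2 with h | h
  · have hx' : x < 2*a+b+5 := by
      interval_cases i
      · rw [Ib_zero, A0] at hx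
        simp only [Finset.mem_union, Finset.mem_Ico] at hx; omega
      · rw [Ib_one, A1] at hx
        simp only [Finset.mem_union, Finset.mem_Ico] at hx; omega
    have : (0:ℕ) ≤ (m+2)*(a+1) := Nat.zero_le _
    omega
  · obtain ⟨j, rfl⟩ : ∃ j, i = j + 2 := ⟨i - 2, by omega⟩
    rw [Ib_two, Wf, Ms] at hx
    simp only [Finset.mem_union, Finset.mem_Ico] at hx
    have h1 : j*(a+1) + (a+1) ≤ (m+2)*(a+1) := by
      rw [← Nat.succ_mul]; exact Nat.mul_le_mul_right _ (by omega)
    have : (0:ℕ) ≤ (m+2)*(a+1) := Nat.zero_le _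
    omega

/-! union cards -/

theorem card_u01 (a b : ℕ) : (A0 a b ∪ A1 a b).card = 2*a+b+5 := by
  have h : A0 a b ∪ A1 a b = Finset.Ico 0 (2*a+b+5) := by
    ext x
    simp only [A0, A1, Finset.mem_union, Finset.mem_Ico]
    omega
  rw [h, Nat.card_Ico]; omega

theorem card_u0W (a b j : ℕ) : (A0 a b ∪ (Wf b ∪ Ms a b j)).card = 2*a+b+5 := by
  have hc := Ms_anchor a b j
  have h : A0 a b ∪ (Wf b ∪ Ms a b j)
      = Finset.Ico 0 (a+b+4) ∪
        Finset.Ico (2*a+b+5 + j*(a+1)) (2*a+b+5 + j*(a+1) + (a+1)) := by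
    ext x
    simp only [A0, Wf, Ms, Finset.mem_union, Finset.mem_Ico]
    omega
  rw [h, card2 (by omega)]
  omega

theorem card_u1W (a b j : ℕ) : (A1 a b ∪ (Wf b ∪ Ms a b j)).card = 2*a+b+5 := by
  have hc := Ms_anchor a b j
  have h : A1 a b ∪ (Wf b ∪ Ms a b j)
      = Finset.Ico 0 (b+2) ∪ Finset.Ico (a+b+3) (2*a+b+5) ∪
        Finset.Ico (2*a+b+5 + j*(a+1)) (2*a+b+5 + j*(a+1) + (a+1)) := by
    ext x
    simp only [A1, Wf, Ms, Finset.mem_union, Finset.mem_Ico]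
    omega
  rw [h, card3 (by omega) (by omega) (by omega)]
  omega

theorem card_uWW (a b : ℕ) {i j : ℕ} (hij : i < j) :
    ((Wf b ∪ Ms a b i) ∪ (Wf b ∪ Ms a b j)).card = 2*a+b+4 := by
  have hc := Ms_anchor a b i
  have hc' := Ms_anchor a b j
  have hle := Ms_le a b hij
  have h : (Wf b ∪ Ms a b i) ∪ (Wf b ∪ Ms a b j)
      = Finset.Ico 0 (b+2) ∪
        Finset.Ico (2*a+b+5 + i*(a+1)) (2*a+b+5 + i*(a+1) + (a+1)) ∪
        Finset.Ico (2*a+b+5 + j*(a+1)) (2*a+b+5 + j*(a+1) + (a+1)) := by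
    ext x
    simp only [Wf, Ms, Finset.mem_union, Finset.mem_Ico]
    omega
  rw [h, card3 (by omega) (by omega) (by omega)]
  omega

theorem bigUnion (a b m : ℕ) :
    (Finset.range (m+4)).biUnion (Ib a b)
      = Finset.Ico 0 (2*a+b+5 + (m+2)*(a+1)) := by
  have hMs := biUnion_Ico (2*a+b+5) (a+1) (m+2)
  ext x
  simp only [Finset.mem_biUnion, Finset.mem_range, Finset.mem_Ico]
  constructor
  · rintro ⟨i, hi, hx⟩
    exact ⟨Nat.zero_le x, bound_Ib a b m (by omega) x hx⟩
  · rintro ⟨-, hx⟩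
    rcases Nat.lt_or_ge x (2*a+b+5) with h | h
    · have : x ∈ A0 a b ∪ A1 a b := by
        have e : A0 a b ∪ A1 a b = Finset.Ico 0 (2*a+b+5) := by
          ext y
          simp only [A0, A1, Finset.mem_union, Finset.mem_Ico]
          omega
        rw [e]; simp only [Finset.mem_Ico]; omega
      rcases Finset.mem_union.1 this with h' | h'
      · exact ⟨0, by omega, h'⟩
      · exact ⟨1, by omega, h'⟩
    · have hx' : x ∈ (Finset.range (m+2)).biUnion
          (fun j => Finset.Ico (2*a+b+5 + j*(a+1)) (2*a+b+5 + j*(a+1) + (a+1))) := by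
        rw [hMs]; simp only [Finset.mem_Ico]; omega
      obtain ⟨j, hj, hxj⟩ := Finset.mem_biUnion.1 hx'
      rw [Finset.mem_range] at hj
      refine ⟨j+2, by omega, ?_⟩
      rw [Ib_two]
      exact Finset.mem_union_right _ hxj

end SPIDAux

open SPIDAux

/-- Existence of Class II examples: a `(k; k-t, k-t+1)`-SPID with `n` members of
Class II; such an example is not a `(k-t)`-junta and spans dimension
`k + (n-1)(t-1) + 1`. -/
theorem statement13 {n k t : ℕ} (ht2 : 2 ≤ t) (htk : t + 1 ≤ k) (hn : 4 ≤ n)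
    (hdimV : k + (n - 1) * (t - 1) + 1 ≤ finrank F V) :
    ∃ π : Fin n → Submodule F V,
      IsSPID k {k - t, k - t + 1} π ∧ IsClassII k t n (Set.range π) ∧
      ¬ IsJunta (k - t) π ∧
      finrank F ↥(⨆ i, π i) = k + (n - 1) * (t - 1) + 1 := by
  classical
  obtain ⟨a, rfl⟩ : ∃ a, t = a + 2 := ⟨t - 2, by omega⟩
  obtain ⟨b, rfl⟩ : ∃ b, k = a + b + 3 := ⟨k - a - 3, by omega⟩
  obtain ⟨m, rfl⟩ : ∃ m, n = m + 4 := ⟨n - 4, by omega⟩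
  have e1 : m + 4 - 1 = m + 3 := by omega
  have e2 : a + 2 - 1 = a + 1 := by omega
  have e3 : m + 4 - 2 = m + 2 := by omega
  have e4 : a + b + 3 - (a + 2) = b + 1 := by omega
  have emul : (m + 3) * (a + 1) = (m + 2) * (a + 1) + (a + 1) := Nat.succ_mul _ _
  set D := 2 * a + b + 5 + (m + 2) * (a + 1) with hDdef
  have hPnn : 0 ≤ (m + 2) * (a + 1) := Nat.zero_le _
  have hDle : D ≤ finrank F V := by
    rw [e1, e2, emul] at hdimV; omega
  obtain ⟨v, hv⟩ : ∃ v : Fin D → V, LinearIndependent F v :=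
    ⟨_, (Module.finBasis F V).linearIndependent.comp (Fin.castLE hDle)
      (Fin.castLE_injective hDle)⟩
  set π : Fin (m + 4) → Submodule F V := fun i => Phi F v (Ib a b (i : ℕ)) with hπ
  have hbound : ∀ i : Fin (m + 4), ∀ x ∈ Ib a b (i : ℕ), x < D :=
    fun i => bound_Ib a b m (by omega)
  have hrank : ∀ i, finrank F ↥(π i) = a + b + 3 := fun i => by
    rw [hπ, finrank_Phi hv (hbound i), card_Ib]
  -- master intersection dimension
  have hinf : ∀ i j : Fin (m + 4), (i : ℕ) < (j : ℕ) →
      finrank F ↥(π i ⊓ π j) = if 2 ≤ (i : ℕ) then b + 2 else b + 1 := by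
    intro i j hij
    rw [hπ, finrank_inf hv (hbound i) (hbound j), card_Ib, card_Ib]
    rcases Nat.lt_or_ge (i : ℕ) 2 with h2 | h2
    · rw [if_neg (by omega)]
      rcases Nat.lt_or_ge (j : ℕ) 2 with hj2 | hj2
      · have hi0 : (i : ℕ) = 0 := by omega
        have hj1 : (j : ℕ) = 1 := by omega
        rw [hi0, hj1, Ib_zero, Ib_one, card_u01]; omega
      · obtain ⟨jj, hjj⟩ : ∃ jj, (j : ℕ) = jj + 2 := ⟨(j : ℕ) - 2, by omega⟩
        rcases Nat.lt_or_ge (i : ℕ) 1 with hi1 | hi1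
        · have hi0 : (i : ℕ) = 0 := by omega
          rw [hi0, hjj, Ib_zero, Ib_two, card_u0W]; omega
        · have hi0 : (i : ℕ) = 1 := by omega
          rw [hi0, hjj, Ib_one, Ib_two, card_u1W]; omega
    · rw [if_pos h2]
      obtain ⟨ii, hii⟩ : ∃ ii, (i : ℕ) = ii + 2 := ⟨(i : ℕ) - 2, by omega⟩
      obtain ⟨jj, hjj⟩ : ∃ jj, (j : ℕ) = jj + 2 := ⟨(j : ℕ) - 2, by omega⟩
      rw [hii, hjj, Ib_two, Ib_two, card_uWW a b (show ii < jj by omega)]; omega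
  have hinf' : ∀ i j : Fin (m + 4), i ≠ j →
      finrank F ↥(π i ⊓ π j) = b + 1 ∨ finrank F ↥(π i ⊓ π j) = b + 2 := by
    intro i j hne
    rcases Nat.lt_trichotomy (i : ℕ) (j : ℕ) with h | h | h
    · rcases le_or_gt 2 (i : ℕ) with h2 | h2
      · right; rw [hinf i j h, if_pos h2]
      · left; rw [hinf i j h, if_neg (by omega)]
    · exact absurd (Fin.ext h) hne
    · rw [inf_comm]
      rcases le_or_gt 2 (j : ℕ) with h2 | h2
      · right; rw [hinf j i h, if_pos h2]
      · left; rw [hinf j i h, if_neg (by omega)]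
  have hinj : Function.Injective π := by
    intro i j hij
    by_contra hne
    rcases hinf' i j hne with h | h <;>
    · rw [hij, inf_idem, hrank] at h; omega
  refine ⟨π, ⟨hinj, ?_, ?_, ?_⟩, ?_, ?_, ?_⟩
  · intro i; rw [hrank]
  · intro i j hne
    rcases hinf' i j hne with h | h
    · left; omega
    · right; rw [Set.mem_singleton_iff]; omega
  · intro ℓ hℓ
    simp only [Set.mem_insert_iff, Set.mem_singleton_iff] at hℓ
    rcases hℓ with h | h
    · refine ⟨⟨0, by omega⟩, ⟨1, by omega⟩, by simp [Fin.ext_iff], ?_⟩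
      rw [hinf ⟨0, by omega⟩ ⟨1, by omega⟩ (by simp), if_neg (by simp)]
      omega
    · refine ⟨⟨2, by omega⟩, ⟨3, by omega⟩, by simp [Fin.ext_iff], ?_⟩
      rw [hinf ⟨2, by omega⟩ ⟨3, by omega⟩ (by simp), if_pos (by simp)]
      omega
  -- IsClassII
  · have hWfB : ∀ x ∈ Wf b, x < D := by
      intro x hx; simp only [Wf, Finset.mem_Ico] at hx; omega
    have hIcoB : ∀ (u w : ℕ), w ≤ 2*a+b+5 → ∀ x ∈ Finset.Ico u w, x < D := by
      intro u w hw x hx; simp only [Finset.mem_Ico] at hx; omega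
    have hMsB : ∀ jj : ℕ, jj ≤ m+1 → ∀ x ∈ Ms a b jj, x < D := by
      intro jj hjj x hx
      exact bound_Ib a b m (i := jj+2) (by omega) x
        (by rw [Ib_two]; exact Finset.mem_union_right _ hx)
    have key0 : Phi F v (A0 a b)
        = Phi F v (Finset.Ico 0 (b+1)) ⊔ Phi F v (Finset.Ico (b+2) (a+b+4)) := by
      rw [Phi_sup]; rfl
    have key1 : Phi F v (A1 a b)
        = Phi F v (Finset.Ico 1 (b+2)) ⊔ Phi F v (Finset.Ico (a+b+3) (2*a+b+5)) := by
      rw [Phi_sup]; rfl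
    have keyW : ∀ jj : ℕ, Phi F v (Wf b ∪ Ms a b jj)
        = Phi F v (Wf b) ⊔ Phi F v (Ms a b jj) := fun jj => (Phi_sup F v _ _).symm
    refine ⟨Phi F v (Wf b), Phi F v (Finset.Ico 0 (b+1)), Phi F v (Finset.Ico 1 (b+2)),
      Phi F v (Finset.Ico (b+2) (a+b+4)), Phi F v (Finset.Ico (a+b+3) (2*a+b+5)),
      fun j : Fin (m+4-2) => Phi F v (Ms a b (j : ℕ)),
      ?_, ?_, ?_, ?_, ?_, ?_, ?_, ?_, ?_, ?_, ?_, ?_⟩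
    · rw [finrank_Phi hv hWfB, Wf, Nat.card_Ico]; omega
    · refine Phi_mono F v ?_
      intro x hx; simp only [Wf, Finset.mem_Ico] at *; omega
    · refine Phi_mono F v ?_
      intro x hx; simp only [Wf, Finset.mem_Ico] at *; omega
    · intro hEq
      have h0 : v ⟨0, by omega⟩ ∈ Phi F v (Finset.Ico 0 (b+1)) :=
        (mem_Phi hv _ _).2 (by simp)
      rw [hEq] at h0
      have := (mem_Phi hv _ _).1 h0
      simp at this
    · rw [finrank_Phi hv (hIcoB _ _ (by omega)), Nat.card_Ico]; omega
    · rw [finrank_Phi hv (hIcoB _ _ (by omega)), Nat.card_Ico]; omega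
    · rw [finrank_Phi hv (hIcoB _ _ (by omega)), Nat.card_Ico]; omega
    · rw [finrank_Phi hv (hIcoB _ _ (by omega)), Nat.card_Ico]; omega
    · rw [Phi_sup]
      have e : Finset.Ico (b+2) (a+b+4) ∪ Finset.Ico (a+b+3) (2*a+b+5)
          = Finset.Ico (b+2) (2*a+b+5) := by
        ext x; simp only [Finset.mem_union, Finset.mem_Ico]; omega
      rw [e, finrank_Phi hv (hIcoB _ _ (by omega)), Nat.card_Ico]; omega
    · intro j
      have hj := j.isLt
      rw [finrank_Phi hv (hMsB (j : ℕ) (by omega)), Ms, Nat.card_Ico]; omega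
    · have hbu : (Finset.range (m+2)).biUnion (Ms a b)
          = Finset.Ico (2*a+b+5) (2*a+b+5 + (m+2)*(a+1)) :=
        biUnion_Ico (2*a+b+5) (a+1) (m+2)
      have hsup : (⨆ j : Fin (m+4-2), Phi F v (Ms a b (j : ℕ)))
          = Phi F v ((Finset.range (m+2)).biUnion (Ms a b)) := by
        rw [Phi_iSup F v, biUnion_fin, e3]
      rw [hsup, Phi_sup, Phi_sup, Phi_sup]
      have e : (Wf b ∪ (Finset.Ico (b+2) (a+b+4) ∪ Finset.Ico (a+b+3) (2*a+b+5)))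
            ∪ (Finset.range (m+2)).biUnion (Ms a b) = Finset.Ico 0 D := by
        rw [hbu]
        ext x
        simp only [Wf, Finset.mem_union, Finset.mem_Ico]
        omega
      rw [e, finrank_Phi hv (by intro x hx; simp only [Finset.mem_Ico] at hx; omega),
        Nat.card_Ico, e3, e2]
      omega
    · ext S
      simp only [Set.mem_union, Set.mem_insert_iff, Set.mem_singleton_iff, Set.mem_range]
      constructor
      · rintro ⟨i, rfl⟩
        rcases Nat.lt_or_ge (i : ℕ) 2 with h2 | h2
        · rcases Nat.lt_or_ge (i : ℕ) 1 with h1 | h1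
          · left; left
            rw [← key0, hπ]
            simp only [show (i : ℕ) = 0 by omega, Ib_zero]
          · left; right
            rw [← key1, hπ]
            simp only [show (i : ℕ) = 1 by omega, Ib_one]
        · obtain ⟨jj, hjj⟩ : ∃ jj, (i : ℕ) = jj + 2 := ⟨(i : ℕ) - 2, by omega⟩
          have hjlt : jj < m + 4 - 2 := by have := i.isLt; omega
          right
          refine ⟨⟨jj, hjlt⟩, ?_⟩
          rw [← keyW, hπ]
          simp only [hjj, Ib_two]
      · rintro ((rfl | rfl) | ⟨j, rfl⟩)
        · refine ⟨⟨0, by omega⟩, ?_⟩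
          rw [← key0, hπ]
          simp only [Ib_zero]
        · refine ⟨⟨1, by omega⟩, ?_⟩
          rw [← key1, hπ]
          simp only [Ib_one]
        · have hj := j.isLt
          refine ⟨⟨(j : ℕ) + 2, by omega⟩, ?_⟩
          rw [← keyW, hπ]
          simp only [Ib_two]
  -- not a junta
  · rintro ⟨C, hC, hCle⟩
    obtain ⟨i0, hi0⟩ : ∃ i : Fin (m+4), (i : ℕ) = 0 := ⟨⟨0, by omega⟩, rfl⟩
    obtain ⟨i1, hi1⟩ : ∃ i : Fin (m+4), (i : ℕ) = 1 := ⟨⟨1, by omega⟩, rfl⟩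
    obtain ⟨i2, hi2⟩ : ∃ i : Fin (m+4), (i : ℕ) = 2 := ⟨⟨2, by omega⟩, rfl⟩
    have hIb2 : Ib a b 2 = Wf b ∪ Ms a b 0 := Ib_two a b 0
    have h02 : finrank F ↥(π i0 ⊓ π i2) = b + 1 := by
      rw [hinf _ _ (by omega), if_neg (by omega)]
    have h12 : finrank F ↥(π i1 ⊓ π i2) = b + 1 := by
      rw [hinf _ _ (by omega), if_neg (by omega)]
    have hCrank : finrank F ↥C = b + 1 := by omega
    have hW1rank : finrank F ↥(Phi F v (Finset.Ico 0 (b+1))) = b + 1 := by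
      rw [finrank_Phi hv (by intro x hx; simp only [Finset.mem_Ico] at hx; omega),
        Nat.card_Ico]; omega
    have hW2rank : finrank F ↥(Phi F v (Finset.Ico 1 (b+2))) = b + 1 := by
      rw [finrank_Phi hv (by intro x hx; simp only [Finset.mem_Ico] at hx; omega),
        Nat.card_Ico]; omega
    have hW1le : Phi F v (Finset.Ico 0 (b+1)) ≤ π i0 ⊓ π i2 := by
      refine le_inf ?_ ?_
      · simp only [hπ]
        refine Phi_mono F v ?_
        intro x hx
        simp only [hi0, Ib_zero, A0, Finset.mem_union]
        exact Or.inl hx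
      · simp only [hπ]
        refine Phi_mono F v ?_
        intro x hx
        simp only [hi2, hIb2, Finset.mem_union]
        left
        simp only [Wf, Finset.mem_Ico] at *
        omega
    have hW2le : Phi F v (Finset.Ico 1 (b+2)) ≤ π i1 ⊓ π i2 := by
      refine le_inf ?_ ?_
      · simp only [hπ]
        refine Phi_mono F v ?_
        intro x hx
        simp only [hi1, Ib_one, A1, Finset.mem_union]
        exact Or.inl hx
      · simp only [hπ]
        refine Phi_mono F v ?_
        intro x hx
        simp only [hi2, hIb2, Finset.mem_union]
        left
        simp only [Wf, Finset.mem_Ico] at *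
        omega
    have eC1 : C = π i0 ⊓ π i2 :=
      Submodule.eq_of_le_of_finrank_le (le_inf (hCle _) (hCle _)) (by omega)
    have eW1 : Phi F v (Finset.Ico 0 (b+1)) = π i0 ⊓ π i2 :=
      Submodule.eq_of_le_of_finrank_le hW1le (by omega)
    have eC2 : C = π i1 ⊓ π i2 :=
      Submodule.eq_of_le_of_finrank_le (le_inf (hCle _) (hCle _)) (by omega)
    have eW2 : Phi F v (Finset.Ico 1 (b+2)) = π i1 ⊓ π i2 :=
      Submodule.eq_of_le_of_finrank_le hW2le (by omega)
    have hEq : Phi F v (Finset.Ico 0 (b+1)) = Phi F v (Finset.Ico 1 (b+2)) :=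
      eW1.trans (eC1.symm.trans (eC2.trans eW2.symm))
    have h0 : v ⟨0, by omega⟩ ∈ Phi F v (Finset.Ico 0 (b+1)) :=
      (mem_Phi hv _ _).2 (by simp)
    have h0' := (le_of_eq hEq) h0
    have := (mem_Phi hv _ _).1 h0'
    simp at this
  -- total dimension
  · have hs : (⨆ i, π i) = Phi F v ((Finset.range (m+4)).biUnion (Ib a b)) := by
      rw [hπ, Phi_iSup F v, biUnion_fin]
    rw [hs, bigUnion,
      finrank_Phi hv (by intro x hx; simp only [Finset.mem_Ico] at hx; omega),
      Nat.card_Ico, e1, e2, emul]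
    omega
end
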